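/- arXiv:2511.12433 — 6 statements merged into one kernel-verified Lean document; each statement's English description precedes it below -/
import Mathlib

section
/- For all real x, y, nonzero real λ, and n ≥ 0, the degenerate falling factorial satisfies the binomial-type identity (x+y)_{n,λ} = Σ_{l=0}^{n} C(n,l) (x)_{l,λ} (y)_{n-l,λ}. -/
open Finset

/-- The degenerate falling factorial `(x)_{n,λ} = x(x-λ)⋯(x-(n-1)λ)`. -/
noncomputable def degFall (l x : ℝ) (n : ℕ) : ℝ :=
  ∏ i ∈ Finset.range n, (x - (i : ℝ) * l)

lemma smeval_descPochhammer_eq (n : ℕ) (r : ℝ) :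
    (descPochhammer ℤ n).smeval r = ∏ i ∈ Finset.range n, (r - (i : ℝ)) := by
  induction n with
  | zero => simp
  | succ k ih =>
    rw [descPochhammer_succ_right, Polynomial.smeval_mul, ih, Finset.prod_range_succ]
    congr 1
    simp [Polynomial.smeval_sub, Polynomial.smeval_X, Polynomial.smeval_natCast]

lemma degFall_eq (l : ℝ) (hl : l ≠ 0) (x : ℝ) (n : ℕ) :
    degFall l x n = l ^ n * (descPochhammer ℤ n).smeval (x / l) := by
  rw [smeval_descPochhammer_eq, degFall, Finset.pow_eq_prod_const, ← Finset.prod_mul_distrib]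
  refine Finset.prod_congr rfl fun i _ => ?_
  field_simp

theorem degFall_add (l : ℝ) (hl : l ≠ 0) (x y : ℝ) (n : ℕ) :
    degFall l (x + y) n =
      ∑ k ∈ Finset.range (n + 1),
        (n.choose k : ℝ) * degFall l x k * degFall l y (n - k) := by
  have h : (x + y) / l = x / l + y / l := by ring
  rw [degFall_eq l hl, h, Ring.descPochhammer_smeval_add n (Commute.all _ _),
    Finset.Nat.sum_antidiagonal_eq_sum_range_succ_mk, Finset.mul_sum]
  refine Finset.sum_congr rfl fun k hk => ?_
  have hkn : k ≤ n := Nat.lt_succ_iff.mp (Finset.mem_range.mp hk)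
  rw [degFall_eq l hl x, degFall_eq l hl y]
  have : l ^ n = l ^ k * l ^ (n - k) := by rw [← pow_add, Nat.add_sub_cancel' hkn]
  rw [this]; ring
end

section
/- For nonzero λ and x with 1+λx > 0, the generating function identity e_λ(x)^{-1} · e_λ(x·e_λ(t)) = e_λ((x/(1+λx))·(e_λ(t)-1)) holds as formal power series in t (equivalently, for all t near 0). -/
/-- For nonzero λ and x with 1+λx > 0, the identity
`e_λ(x)⁻¹ · e_λ(x·e_λ(t)) = e_λ((x/(1+λx))·(e_λ(t)-1))` holds for all t near 0,
where `e_λ^y(t) = (1+λt)^(y/λ)` and `e_λ = e_λ^1`. -/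
theorem gen_fun_identity (l x : ℝ) (hl : l ≠ 0) (hx : 0 < 1 + l * x) :
    ∃ ε > 0, ∀ t : ℝ, |t| < ε →
      ((1 + l * x) ^ (1 / l))⁻¹ * (1 + l * (x * (1 + l * t) ^ (1 / l))) ^ (1 / l) =
        (1 + l * (x / (1 + l * x) * ((1 + l * t) ^ (1 / l) - 1))) ^ (1 / l) := by
  have hcont : ContinuousAt (fun t : ℝ => 1 + l * (x * (1 + l * t) ^ (1 / l))) 0 := by
    have hinner : ContinuousAt (fun t : ℝ => 1 + l * t) 0 :=
      continuousAt_const.add (continuousAt_const.mul continuousAt_id)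
    have hrpow : ContinuousAt (fun t : ℝ => (1 + l * t) ^ (1 / l)) 0 :=
      hinner.rpow_const (by left; norm_num)
    exact continuousAt_const.add (continuousAt_const.mul (continuousAt_const.mul hrpow))
  have h2 : ∀ᶠ t : ℝ in nhds 0, 0 < 1 + l * (x * (1 + l * t) ^ (1 / l)) := by
    have := (continuousAt_const : ContinuousAt (fun _ : ℝ => (0:ℝ)) 0).eventually_lt hcont
      (by simpa using hx)
    filter_upwards [this] with t ht using ht
  have h1 : ∀ᶠ t : ℝ in nhds 0, 0 < 1 + l * t := by
    have := (continuousAt_const : ContinuousAt (fun _ : ℝ => (0:ℝ)) 0).eventually_lt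
      (continuousAt_const.add (continuousAt_const.mul continuousAt_id))
      (show (0:ℝ) < 1 + l * 0 by norm_num)
    filter_upwards [this] with t ht using ht
  obtain ⟨ε, hε, hball⟩ := Metric.eventually_nhds_iff.mp (h1.and h2)
  refine ⟨ε, hε, fun t ht => ?_⟩
  obtain ⟨ht1, ht2⟩ := hball (by simpa [Real.dist_eq] using ht)
  set g := (1 + l * t) ^ (1 / l) with hg
  have hb : (0:ℝ) < 1 + l * x := hx
  have key : 1 + l * (x / (1 + l * x) * (g - 1)) = (1 + l * (x * g)) / (1 + l * x) := by
    field_simp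
    ring
  rw [key, Real.div_rpow ht2.le hb.le]
  exact (div_eq_inv_mul _ _).symm
end

section
/- For the operators X (multiplication by x) and D (differentiation d/dx) acting on polynomials, and for all n ≥ 0, one has (XD)_{n,λ} = Σ_{k=0}^{n} S_λ(n,k) X^k D^k, where (XD)_{n,λ} = (XD)(XD-λ)⋯(XD-(n-1)λ) is the degenerate falling factorial of the operator XD. -/
open Finset Polynomial

/-- The multiplication-by-x operator `X` on polynomials. -/
noncomputable def Xop : Module.End ℝ (Polynomial ℝ) :=
  LinearMap.mulLeft ℝ (Polynomial.X : Polynomial ℝ)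

/-- The differentiation operator `D` on polynomials. -/
noncomputable def Dop : Module.End ℝ (Polynomial ℝ) :=
  Polynomial.derivative

/-- The degenerate falling factorial `(A)_{n,λ} = A(A-λ)⋯(A-(n-1)λ)` of an operator `A`. -/
noncomputable def opFall (l : ℝ) (A : Module.End ℝ (Polynomial ℝ)) (n : ℕ) :
    Module.End ℝ (Polynomial ℝ) :=
  ((List.range n).map (fun i => A - ((i : ℝ) * l) • (1 : Module.End ℝ (Polynomial ℝ)))).prod

lemma opFall_succ (l : ℝ) (A : Module.End ℝ (Polynomial ℝ)) (n : ℕ) :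
    opFall l A (n + 1) = opFall l A n * (A - ((n : ℝ) * l) • 1) := by
  simp [opFall, List.range_succ]

lemma XD_apply (m : ℕ) : (Xop * Dop) (X ^ m : ℝ[X]) = (m : ℝ) • X ^ m := by
  cases m with
  | zero => simp [Xop, Dop]
  | succ m =>
      simp only [Module.End.mul_apply, Dop, Xop, LinearMap.mulLeft_apply, derivative_X_pow]
      push_cast
      rw [Polynomial.smul_eq_C_mul]
      push_cast
      ring

lemma XkDk_apply (k m : ℕ) :
    (Xop ^ k * Dop ^ k) (X ^ m : ℝ[X]) = (∏ i ∈ Finset.range k, ((m : ℝ) - i)) • X ^ m := by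
  induction k generalizing m with
  | zero => simp
  | succ k ih =>
      cases m with
      | zero =>
          simp [pow_succ, Module.End.mul_apply, Dop, Finset.prod_range_succ']
      | succ m =>
          have h1 : Xop ^ (k+1) * Dop ^ (k+1) = Xop * (Xop ^ k * Dop ^ k) * Dop := by
            rw [pow_succ' Xop, pow_succ Dop, mul_assoc, mul_assoc, mul_assoc]
          have h2 : Dop (X ^ (m+1) : ℝ[X]) = ((m : ℝ) + 1) • X ^ m := by
            simp [Dop, derivative_X_pow, Polynomial.smul_eq_C_mul]
          rw [h1, Module.End.mul_apply, Module.End.mul_apply, h2, map_smul, ih, map_smul]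
          simp only [Xop, LinearMap.mulLeft_apply]
          rw [mul_smul_comm, smul_smul]
          rw [show (X:ℝ[X]) * X^m = X^(m+1) from (pow_succ' X m).symm]
          congr 1
          rw [Finset.prod_range_succ']
          push_cast
          rw [Finset.prod_congr rfl (fun i _ => by ring :
            ∀ i ∈ Finset.range k, (m:ℝ)+1 - ((i:ℝ)+1) = (m:ℝ) - i)]
          ring

lemma opFall_XD_apply (l : ℝ) (n m : ℕ) :
    opFall l (Xop * Dop) n (X ^ m : ℝ[X]) = degFall l (m : ℝ) n • X ^ m := by
  induction n with
  | zero => simp [opFall, degFall]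
  | succ n ih =>
      rw [opFall_succ]
      rw [Module.End.mul_apply, LinearMap.sub_apply, LinearMap.smul_apply,
        Module.End.one_apply, XD_apply, ← sub_smul, map_smul, ih, smul_smul]
      rw [degFall, degFall, Finset.prod_range_succ, mul_comm]

/-- `(XD)_{n,λ} = Σ_{k=0}^n S_λ(n,k) Xᵏ Dᵏ`, where `S_λ(n,k)` are the degenerate Stirling
numbers of the second kind, characterized by `(z)_{n,λ} = Σ_k S_λ(n,k) z(z-1)⋯(z-k+1)`. -/
theorem XD_degFall_expansion (l : ℝ) (hl : l ≠ 0)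
    (S : ℕ → ℕ → ℝ)
    (hS : ∀ n : ℕ, ∀ z : ℝ,
      degFall l z n = ∑ k ∈ Finset.range (n + 1), S n k * ∏ i ∈ Finset.range k, (z - (i : ℝ)))
    (n : ℕ) :
    opFall l (Xop * Dop) n = ∑ k ∈ Finset.range (n + 1), S n k • (Xop ^ k * Dop ^ k) := by
  apply LinearMap.ext
  intro p
  induction p using Polynomial.induction_on' with
  | add p q hp hq => simp only [map_add, hp, hq]
  | monomial m a =>
      rw [← Polynomial.smul_X_eq_monomial, map_smul, map_smul]
      congr 1
      rw [opFall_XD_apply, hS n m, LinearMap.sum_apply]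
      simp only [LinearMap.smul_apply, XkDk_apply, smul_smul, Finset.sum_smul]
end

section
/- For n, m ≥ 0, the Spivey-type recurrence B_{n+m,λ}(x,y) = Σ_{j=0}^{m} Σ_{k=0}^{n} S_λ(m,j) C(n,k) (j−mλ)_{n−k,λ} (y)_{j,λ} x^j B_{k,λ}(x, y−jλ) holds. -/
open Finset
open Filter

lemma ff_coeff_unique (N : ℕ) (d : ℕ → ℝ)
    (h : ∀ z : ℝ, ∑ j ∈ range N, d j * ∏ i ∈ range j, (z - (i : ℝ)) = 0) :
    ∀ k < N, d k = 0 := by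
  intro k
  induction k using Nat.strong_induction_on with
  | _ k ih =>
    intro hkN
    have h0 := h (k : ℝ)
    have hsingle : ∑ j ∈ range N, d j * ∏ i ∈ range j, ((k : ℝ) - (i : ℝ)) =
        d k * ∏ i ∈ range k, ((k : ℝ) - (i : ℝ)) := by
      apply Finset.sum_eq_single_of_mem k (Finset.mem_range.mpr hkN)
      intro j hj hne
      rcases lt_or_gt_of_ne hne with hlt | hgt
      · rw [ih j hlt (lt_trans hlt hkN)]; ring
      · have hk : k ∈ range j := Finset.mem_range.mpr hgt
        rw [Finset.prod_eq_zero hk (by ring)]; ring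
    rw [hsingle] at h0
    have hprod : (0:ℝ) < ∏ i ∈ range k, ((k : ℝ) - (i : ℝ)) := by
      apply Finset.prod_pos
      intro i hi
      rw [Finset.mem_range] at hi
      have : (i : ℝ) < (k : ℝ) := by exact_mod_cast hi
      linarith
    rcases mul_eq_zero.mp h0 with h | h
    · exact h
    · exact absurd h hprod.ne'

lemma bsum (l : ℝ) (Sm : ℕ → ℝ) (m : ℕ) (g : ℕ → ℝ) :
    ∑ j ∈ range (m + 2),
      ((if j = 0 then 0 else Sm (j - 1)) + ((j : ℝ) - (m : ℝ) * l) *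
        (if j ≤ m then Sm j else 0)) * g j
    = ∑ j ∈ range (m + 1), Sm j * (g (j + 1) + ((j : ℝ) - (m : ℝ) * l) * g j) := by
  have e0 : ∀ j, ((if j = 0 then 0 else Sm (j - 1)) + ((j : ℝ) - (m : ℝ) * l) *
        (if j ≤ m then Sm j else 0)) * g j
      = (if j = 0 then 0 else Sm (j - 1)) * g j +
        (((j : ℝ) - (m : ℝ) * l) * (if j ≤ m then Sm j else 0)) * g j := fun j => by ring
  rw [Finset.sum_congr rfl (fun j _ => e0 j), Finset.sum_add_distrib]
  have e1 : ∑ j ∈ range (m + 2), (if j = 0 then (0:ℝ) else Sm (j - 1)) * g j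
      = ∑ j ∈ range (m + 1), Sm j * g (j + 1) := by
    rw [Finset.sum_range_succ']
    simp
  have e2 : ∑ j ∈ range (m + 2), (((j : ℝ) - (m : ℝ) * l) *
      (if j ≤ m then Sm j else 0)) * g j
      = ∑ j ∈ range (m + 1), (((j : ℝ) - (m : ℝ) * l) * Sm j) * g j := by
    rw [Finset.sum_range_succ]
    rw [if_neg (by omega)]
    rw [Finset.sum_congr rfl (fun j hj => by
      rw [if_pos (Nat.lt_succ_iff.mp (Finset.mem_range.mp hj))])]
    ring
  rw [e1, e2, ← Finset.sum_add_distrib]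
  apply Finset.sum_congr rfl
  intro j _
  ring

lemma S_rec (l : ℝ) (S : ℕ → ℕ → ℝ)
    (hS : ∀ m : ℕ, ∀ z : ℝ,
      degFall l z m = ∑ j ∈ Finset.range (m + 1), S m j * ∏ i ∈ Finset.range j, (z - (i : ℝ)))
    (m : ℕ) : ∀ j < m + 2, S (m + 1) j =
      (if j = 0 then 0 else S m (j - 1)) +
        ((j : ℝ) - (m : ℝ) * l) * (if j ≤ m then S m j else 0) := by
  have key : ∀ k < m + 2, S (m + 1) k -
      ((if k = 0 then 0 else S m (k - 1)) +
        ((k : ℝ) - (m : ℝ) * l) * (if k ≤ m then S m k else 0)) = 0 := by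
    apply ff_coeff_unique
    intro z
    have expand : ∀ j : ℕ, (S (m + 1) j -
        ((if j = 0 then 0 else S m (j - 1)) +
          ((j : ℝ) - (m : ℝ) * l) * (if j ≤ m then S m j else 0))) *
          ∏ i ∈ range j, (z - (i : ℝ))
        = S (m + 1) j * ∏ i ∈ range j, (z - (i : ℝ)) -
          ((if j = 0 then 0 else S m (j - 1)) +
            ((j : ℝ) - (m : ℝ) * l) * (if j ≤ m then S m j else 0)) *
            ∏ i ∈ range j, (z - (i : ℝ)) := fun j => by ring
    rw [Finset.sum_congr rfl (fun j _ => expand j), Finset.sum_sub_distrib]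
    rw [← hS (m + 1) z]
    rw [bsum l (S m) m (fun j => ∏ i ∈ range j, (z - (i : ℝ)))]
    have e3 : ∑ j ∈ range (m + 1), S m j *
        ((∏ i ∈ range (j + 1), (z - (i : ℝ))) + ((j : ℝ) - (m : ℝ) * l) *
          ∏ i ∈ range j, (z - (i : ℝ)))
        = (∑ j ∈ range (m + 1), S m j * ∏ i ∈ range j, (z - (i : ℝ))) *
          (z - (m : ℝ) * l) := by
      rw [Finset.sum_mul]
      apply Finset.sum_congr rfl
      intro j _
      rw [Finset.prod_range_succ]
      ring
    rw [e3, ← hS m z]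
    rw [show degFall l z (m + 1) = degFall l z m * (z - (m : ℝ) * l) from by
      rw [degFall, Finset.prod_range_succ, ← degFall]]
    ring
  intro j hj
  have := key j hj
  linarith

lemma S_split (l : ℝ) (S : ℕ → ℕ → ℝ)
    (hS : ∀ m : ℕ, ∀ z : ℝ,
      degFall l z m = ∑ j ∈ Finset.range (m + 1), S m j * ∏ i ∈ Finset.range j, (z - (i : ℝ)))
    (m : ℕ) (g : ℕ → ℝ) :
    ∑ j ∈ range (m + 2), S (m + 1) j * g j
      = ∑ j ∈ range (m + 1), S m j * (g (j + 1) + ((j : ℝ) - (m : ℝ) * l) * g j) := by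
  rw [Finset.sum_congr rfl (fun j hj => by
    rw [S_rec l S hS m j (Finset.mem_range.mp hj)])]
  exact bsum l (S m) m g

lemma S_zero_zero (l : ℝ) (S : ℕ → ℕ → ℝ)
    (hS : ∀ m : ℕ, ∀ z : ℝ,
      degFall l z m = ∑ j ∈ Finset.range (m + 1), S m j * ∏ i ∈ Finset.range j, (z - (i : ℝ))) :
    S 0 0 = 1 := by
  have := hS 0 0
  simp [degFall] at this
  linarith


lemma chain_iteratedDeriv {s : Set ℝ} (hs : IsOpen s) {D : ℕ → ℝ → ℝ} {f : ℝ → ℝ}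
    (h0 : ∀ t ∈ s, D 0 t = f t)
    (hD : ∀ k, ∀ t ∈ s, HasDerivAt (D k) (D (k + 1) t) t) :
    ∀ k, ∀ t ∈ s, iteratedDeriv k f t = D k t := by
  intro k
  induction k with
  | zero => intro t ht; rw [iteratedDeriv_zero, ← h0 t ht]
  | succ k ih =>
    intro t ht
    rw [iteratedDeriv_succ]
    have hev : iteratedDeriv k f =ᶠ[nhds t] D k :=
      Filter.eventually_of_mem (hs.mem_nhds ht) fun u hu => ih u hu
    rw [hev.deriv_eq, (hD k t ht).deriv]

lemma eventuallyEq_iteratedDeriv {f g : ℝ → ℝ} {x : ℝ} (h : f =ᶠ[nhds x] g) (n : ℕ) :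
    iteratedDeriv n f =ᶠ[nhds x] iteratedDeriv n g := by
  induction n with
  | zero => simpa [iteratedDeriv_zero] using h
  | succ n ih => rw [iteratedDeriv_succ, iteratedDeriv_succ]; exact ih.deriv

lemma iteratedDeriv_add_split (n m : ℕ) (f : ℝ → ℝ) :
    iteratedDeriv (n + m) f = iteratedDeriv n (iteratedDeriv m f) := by
  induction n with
  | zero => simp [iteratedDeriv_zero]
  | succ n ih =>
    have : n + 1 + m = (n + m) + 1 := by omega
    rw [this, iteratedDeriv_succ, ih, ← iteratedDeriv_succ]

lemma pascal_conv (h : ℕ → ℝ) (n : ℕ) :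
    ∑ k ∈ range (n + 2), ((n + 1).choose k : ℝ) * h k =
      ∑ k ∈ range (n + 1), (n.choose k : ℝ) * (h k + h (k + 1)) := by
  have e1 : ∑ k ∈ range (n + 2), ((n + 1).choose k : ℝ) * h k =
      ((n+1).choose 0 : ℝ) * h 0 + ∑ k ∈ range (n + 1), ((n + 1).choose (k+1) : ℝ) * h (k+1) := by
    rw [Finset.sum_range_succ']; ring
  have e2 : ∑ k ∈ range (n + 2), (n.choose k : ℝ) * h k =
      (n.choose 0 : ℝ) * h 0 + ∑ k ∈ range (n + 1), (n.choose (k+1) : ℝ) * h (k+1) := by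
    rw [Finset.sum_range_succ']; ring
  have e3 : ∑ k ∈ range (n + 2), (n.choose k : ℝ) * h k =
      ∑ k ∈ range (n + 1), (n.choose k : ℝ) * h k := by
    rw [Finset.sum_range_succ, Nat.choose_succ_self]; simp
  have e4 : ∀ k ∈ range (n+1), ((n + 1).choose (k+1) : ℝ) * h (k+1) =
      (n.choose k : ℝ) * h (k+1) + (n.choose (k+1) : ℝ) * h (k+1) := by
    intro k _
    rw [Nat.choose_succ_succ]
    push_cast; ring
  rw [e1, Finset.sum_congr rfl e4, Finset.sum_add_distrib]
  have e5 : ∑ k ∈ range (n + 1), (n.choose (k+1) : ℝ) * h (k+1) =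
      ∑ k ∈ range (n + 1), (n.choose k : ℝ) * h k - (n.choose 0 : ℝ) * h 0 := by
    rw [← e3, e2]; ring
  rw [e5]
  have e6 : ∑ k ∈ range (n + 1), (n.choose k : ℝ) * (h k + h (k + 1)) =
      ∑ k ∈ range (n + 1), (n.choose k : ℝ) * h k
      + ∑ k ∈ range (n + 1), (n.choose k : ℝ) * h (k + 1) := by
    rw [← Finset.sum_add_distrib]; apply Finset.sum_congr rfl; intros; ring
  rw [e6]
  simp only [Nat.choose_zero_right, Nat.cast_one, one_mul]
  ring

lemma chain_mul {s : Set ℝ} {Df Dg : ℕ → ℝ → ℝ}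
    (hf : ∀ k, ∀ t ∈ s, HasDerivAt (Df k) (Df (k + 1) t) t)
    (hg : ∀ k, ∀ t ∈ s, HasDerivAt (Dg k) (Dg (k + 1) t) t) (n : ℕ) :
    ∀ t ∈ s, HasDerivAt
      (fun u => ∑ k ∈ range (n + 1), (n.choose k : ℝ) * (Df (n - k) u * Dg k u))
      (∑ k ∈ range (n + 2), ((n+1).choose k : ℝ) * (Df (n + 1 - k) t * Dg k t)) t := by
  intro t ht
  have h1 : HasDerivAt
      (fun u => ∑ k ∈ range (n + 1), (n.choose k : ℝ) * (Df (n - k) u * Dg k u))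
      (∑ k ∈ range (n + 1), (n.choose k : ℝ) *
        (Df (n - k + 1) t * Dg k t + Df (n - k) t * Dg (k + 1) t)) t := by
    apply HasDerivAt.fun_sum
    intro k hk
    exact (((hf (n-k) t ht).mul (hg k t ht)).const_mul _)
  convert h1 using 1
  rw [pascal_conv (fun k => Df (n + 1 - k) t * Dg k t) n]
  apply Finset.sum_congr rfl
  intro k hk
  rw [Finset.mem_range] at hk
  have h2 : n + 1 - k = n - k + 1 := by omega
  have h3 : n + 1 - (k + 1) = n - k := by omega
  rw [h2, h3]

lemma chain_DA {l : ℝ} (hl : l ≠ 0) {s : Set ℝ} (hpos : ∀ t ∈ s, 0 < 1 + l * t) (a : ℝ) :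
    ∀ k, ∀ t ∈ s, HasDerivAt (fun u => degFall l a k * (1 + l * u) ^ ((a - (k : ℝ) * l) / l))
      (degFall l a (k + 1) * (1 + l * t) ^ ((a - ((k : ℝ) + 1) * l) / l)) t := by
  intro k t ht
  have hP := hpos t ht
  have h1 : HasDerivAt (fun u : ℝ => 1 + l * u) l t := by
    simpa using ((hasDerivAt_id t).const_mul l).const_add 1
  have h2 := (h1.rpow_const (p := (a - (k : ℝ) * l) / l) (Or.inl hP.ne')).const_mul
    (degFall l a k)
  refine h2.congr_deriv (Eq.symm ?_)
  have e1 : (a - (k : ℝ) * l) / l - 1 = (a - ((k : ℝ) + 1) * l) / l := by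
    field_simp; ring
  rw [← e1]
  rw [degFall, Finset.prod_range_succ, ← degFall]
  field_simp



noncomputable def auxH (l x Y t : ℝ) : ℝ :=
  ((1 + l * x) ^ (1 / l))⁻¹ * (1 + l * (x * (1 + l * t) ^ (1 / l))) ^ (Y / l)

noncomputable def auxPhi (l x Y : ℝ) (j m : ℕ) (t : ℝ) : ℝ :=
  degFall l Y j * x ^ j *
    ((1 + l * t) ^ (((j : ℝ) - (m : ℝ) * l) / l) * auxH l x (Y - (j : ℝ) * l) t)

lemma auxPhi_hasDerivAt (l x : ℝ) (hl : l ≠ 0) (Y : ℝ) (j m : ℕ) (t : ℝ)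
    (hP : 0 < 1 + l * t) (hU : 0 < 1 + l * (x * (1 + l * t) ^ (1 / l))) :
    HasDerivAt (fun u => auxPhi l x Y j m u)
      (auxPhi l x Y (j + 1) (m + 1) t + ((j : ℝ) - (m : ℝ) * l) * auxPhi l x Y j (m + 1) t) t := by
  have h1 : HasDerivAt (fun u : ℝ => 1 + l * u) l t := by
    simpa using ((hasDerivAt_id t).const_mul l).const_add 1
  have hA := h1.rpow_const (p := ((j : ℝ) - (m : ℝ) * l) / l) (Or.inl hP.ne')
  have h3 := (h1.rpow_const (p := 1 / l) (Or.inl hP.ne')).const_mul x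
  have h4 := (h3.const_mul l).const_add 1
  have hG := h4.rpow_const (p := (Y - (j : ℝ) * l) / l) (Or.inl hU.ne')
  have hH := hG.const_mul (((1 + l * x) ^ (1 / l))⁻¹)
  have hprod := hA.mul hH
  have hfull := hprod.const_mul (degFall l Y j * x ^ j)
  have goal_eq :
      auxPhi l x Y (j + 1) (m + 1) t + ((j : ℝ) - (m : ℝ) * l) * auxPhi l x Y j (m + 1) t =
      degFall l Y j * x ^ j *
        (l * (((j : ℝ) - (m : ℝ) * l) / l) * (1 + l * t) ^ (((j : ℝ) - (m : ℝ) * l) / l - 1) *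
            (((1 + l * x) ^ (1 / l))⁻¹ *
              (1 + l * (x * (1 + l * t) ^ (1 / l))) ^ ((Y - (j : ℝ) * l) / l)) +
          (1 + l * t) ^ (((j : ℝ) - (m : ℝ) * l) / l) *
            (((1 + l * x) ^ (1 / l))⁻¹ *
              (l * (x * (l * (1 / l) * (1 + l * t) ^ (1 / l - 1))) * ((Y - (j : ℝ) * l) / l) *
                (1 + l * (x * (1 + l * t) ^ (1 / l))) ^ ((Y - (j : ℝ) * l) / l - 1)))) := by
    simp only [auxPhi, auxH]
    push_cast
    rw [show (((j : ℝ) + 1 - ((m : ℝ) + 1) * l) / l) = ((j : ℝ) - (m : ℝ) * l) / l + (1 / l - 1) by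
      field_simp; ring]
    rw [Real.rpow_add hP]
    rw [show ((j : ℝ) - ((m : ℝ) + 1) * l) / l = ((j : ℝ) - (m : ℝ) * l) / l - 1 by
      field_simp; ring]
    rw [show (Y - ((j : ℝ) + 1) * l) / l = (Y - (j : ℝ) * l) / l - 1 by
      field_simp; ring]
    rw [show degFall l Y (j + 1) = degFall l Y j * (Y - (j : ℝ) * l) by
      rw [degFall, Finset.prod_range_succ, ← degFall]]
    rw [pow_succ]
    set P0 := (1 + l * t) ^ (((j : ℝ) - (m : ℝ) * l) / l) with hP0
    set P1 := (1 + l * t) ^ (((j : ℝ) - (m : ℝ) * l) / l - 1) with hP1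
    set Pe := (1 + l * t) ^ (1 / l - 1) with hPe
    set U0 := (1 + l * (x * (1 + l * t) ^ (1 / l))) ^ ((Y - (j : ℝ) * l) / l) with hU0
    set U1 := (1 + l * (x * (1 + l * t) ^ (1 / l))) ^ ((Y - (j : ℝ) * l) / l - 1) with hU1
    rw [mul_one_div_cancel hl, one_mul]
    rw [show l * (x * Pe) * ((Y - (j : ℝ) * l) / l) = x * Pe * (Y - (j : ℝ) * l) from by
      field_simp]
    rw [show l * (((j : ℝ) - (m : ℝ) * l) / l) = (j : ℝ) - (m : ℝ) * l from by field_simp]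
    ring
  rw [goal_eq]
  exact hfull


lemma taylor_coeff_of_hasSum {a : ℕ → ℝ} {f : ℝ → ℝ} {ε : ℝ} (hε : 0 < ε)
    (h : ∀ t : ℝ, |t| < ε → HasSum (fun n => a n * t ^ n) (f t)) (n : ℕ) :
    iteratedDeriv n f 0 = n.factorial * a n := by
  set r : NNReal := ⟨ε / 2, (half_pos hε).le⟩ with hr
  set p : FormalMultilinearSeries ℝ ℝ ℝ := FormalMultilinearSeries.ofScalars ℝ a with hp
  have hrad : (r : ENNReal) ≤ p.radius := by
    apply p.le_radius_of_isBigO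
    have hs := (h (ε / 2) (by rw [abs_of_pos (half_pos hε)]; linarith)).summable
    have h0 := hs.tendsto_atTop_zero
    have := (h0.norm).isBigO_one ℝ (l := atTop)
    refine this.congr' ?_ (EventuallyEq.refl _ _)
    filter_upwards with k
    rw [hp, FormalMultilinearSeries.ofScalars_norm]
    simp only [norm_mul, norm_pow, Real.norm_eq_abs]
    rw [abs_of_pos (half_pos hε)]
    rfl
  have hball : HasFPowerSeriesOnBall f p 0 r := by
    refine ⟨hrad, by exact_mod_cast half_pos hε, fun hy => ?_⟩
    rename_i y
    rw [EMetric.mem_ball, edist_zero_right] at hy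
    have hy' : |y| < ε := by
      have : ‖y‖₊ < r := ENNReal.coe_lt_coe.mp hy
      have := (NNReal.coe_lt_coe.mpr this)
      simp only [coe_nnnorm, Real.norm_eq_abs] at this
      calc |y| < ε / 2 := this
        _ < ε := by linarith
    have hsum := h y hy'
    rw [zero_add]
    have : (fun k => p k fun _ => y) = fun k => a k * y ^ k := by
      funext k
      rw [hp, FormalMultilinearSeries.ofScalars_apply_eq, smul_eq_mul]
    rw [this]
    exact hsum
  have hfs := hball.factorial_smul (1 : ℝ) n
  rw [← iteratedDeriv_eq_iteratedFDeriv] at hfs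
  rw [← hfs, hp, FormalMultilinearSeries.ofScalars_apply_eq, smul_eq_mul, one_pow, mul_one,
    nsmul_eq_mul]


lemma chain_Phi (l x : ℝ) (hl : l ≠ 0) (S : ℕ → ℕ → ℝ)
    (hS : ∀ m : ℕ, ∀ z : ℝ,
      degFall l z m = ∑ j ∈ Finset.range (m + 1), S m j * ∏ i ∈ Finset.range j, (z - (i : ℝ)))
    (Y : ℝ) (m : ℕ) (t : ℝ) (hP : 0 < 1 + l * t)
    (hU : 0 < 1 + l * (x * (1 + l * t) ^ (1 / l))) :
    HasDerivAt (fun u => ∑ j ∈ range (m + 1), S m j * auxPhi l x Y j m u)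
      (∑ j ∈ range (m + 2), S (m + 1) j * auxPhi l x Y j (m + 1) t) t := by
  have h1 : HasDerivAt (fun u => ∑ j ∈ range (m + 1), S m j * auxPhi l x Y j m u)
      (∑ j ∈ range (m + 1), S m j * (auxPhi l x Y (j + 1) (m + 1) t +
        ((j : ℝ) - (m : ℝ) * l) * auxPhi l x Y j (m + 1) t)) t :=
    HasDerivAt.fun_sum (fun j _ => (auxPhi_hasDerivAt l x hl Y j m t hP hU).const_mul (S m j))
  rw [S_split l S hS m (fun j => auxPhi l x Y j (m + 1) t)]
  exact h1


/-- Spivey-type recurrence for the two-variable fully degenerate Bell polynomials: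
`B_{n+m,λ}(x,y) = Σ_{j=0}^m Σ_{k=0}^n S_λ(m,j) C(n,k) (j−mλ)_{n−k,λ} (y)_{j,λ} x^j B_{k,λ}(x,y−jλ)`,
where `B_{n,λ}(x,y)` is defined by the EGF
`e_λ(x)⁻¹ e_λ^y(x e_λ(t)) = Σ B_{n,λ}(x,y) tⁿ/n!` and `S_λ(m,j)` are the degenerate
Stirling numbers of the second kind. -/
theorem two_variable_Bell_spivey (l : ℝ) (hl : l ≠ 0)
    (S : ℕ → ℕ → ℝ)
    (hS : ∀ m : ℕ, ∀ z : ℝ,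
      degFall l z m = ∑ j ∈ Finset.range (m + 1), S m j * ∏ i ∈ Finset.range j, (z - (i : ℝ)))
    (B : ℕ → ℝ → ℝ → ℝ)
    (hB : ∀ z y : ℝ, 0 < 1 + l * z → ∃ ε > 0, ∀ t : ℝ, |t| < ε →
      HasSum (fun n : ℕ => B n z y * t ^ n / (n.factorial : ℝ))
        (((1 + l * z) ^ (1 / l))⁻¹ * (1 + l * (z * (1 + l * t) ^ (1 / l))) ^ (y / l)))
    (x y : ℝ) (hx : 0 < 1 + l * x) (n m : ℕ) :
    B (n + m) x y =
      ∑ j ∈ Finset.range (m + 1), ∑ k ∈ Finset.range (n + 1),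
        S m j * (n.choose k : ℝ) * degFall l ((j : ℝ) - (m : ℝ) * l) (n - k) *
          degFall l y j * x ^ j * B k x (y - (j : ℝ) * l) := by
  -- the open set where everything is positive
  have hAopen : IsOpen {t : ℝ | 0 < 1 + l * t} := by
    have : {t : ℝ | 0 < 1 + l * t} = (fun t : ℝ => 1 + l * t) ⁻¹' Set.Ioi 0 := rfl
    rw [this]
    exact (by fun_prop : Continuous fun t : ℝ => 1 + l * t).isOpen_preimage _ isOpen_Ioi
  have hgcont : ContinuousOn (fun t : ℝ => 1 + l * (x * (1 + l * t) ^ (1 / l)))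
      {t : ℝ | 0 < 1 + l * t} := by
    apply ContinuousOn.add continuousOn_const
    apply ContinuousOn.mul continuousOn_const
    apply ContinuousOn.mul continuousOn_const
    apply ContinuousOn.rpow_const (by fun_prop)
    intro t ht
    exact Or.inl (ne_of_gt ht)
  set s : Set ℝ := {t : ℝ | 0 < 1 + l * t} ∩
      (fun t : ℝ => 1 + l * (x * (1 + l * t) ^ (1 / l))) ⁻¹' Set.Ioi 0 with hs_def
  have hsopen : IsOpen s := hgcont.isOpen_inter_preimage hAopen isOpen_Ioi
  have hsP : ∀ t ∈ s, 0 < 1 + l * t := fun t ht => ht.1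
  have hsU : ∀ t ∈ s, 0 < 1 + l * (x * (1 + l * t) ^ (1 / l)) := fun t ht => ht.2
  have h0s : (0 : ℝ) ∈ s := by
    constructor
    · show (0:ℝ) < 1 + l * 0; simp
    · show (0:ℝ) < 1 + l * (x * (1 + l * 0) ^ (1 / l))
      simpa [Real.one_rpow] using hx
  -- Taylor coefficients from the EGF
  have htaylor : ∀ (Y : ℝ) (k : ℕ), iteratedDeriv k (auxH l x Y) 0 = B k x Y := by
    intro Y k
    obtain ⟨ε, hε, hsum⟩ := hB x Y hx
    have h' : ∀ t : ℝ, |t| < ε →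
        HasSum (fun n : ℕ => (B n x Y / (n.factorial : ℝ)) * t ^ n) (auxH l x Y t) := by
      intro t ht
      have h0 := hsum t ht
      have e : (fun n : ℕ => B n x Y * t ^ n / (n.factorial : ℝ)) =
          fun n : ℕ => B n x Y / (n.factorial : ℝ) * t ^ n := by funext n; ring
      rw [e] at h0
      exact h0
    rw [taylor_coeff_of_hasSum hε h' k]
    field_simp
  -- iterated derivatives of the EGF on s
  have hIter : ∀ (Y : ℝ), ∀ k, ∀ t ∈ s, iteratedDeriv k (auxH l x Y) t =
      ∑ j ∈ range (k + 1), S k j * auxPhi l x Y j k t := by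
    intro Y
    apply chain_iteratedDeriv hsopen
      (D := fun k t => ∑ j ∈ range (k + 1), S k j * auxPhi l x Y j k t)
    · intro t _
      simp [auxPhi, S_zero_zero l S hS, degFall]
    · intro k t ht
      exact chain_Phi l x hl S hS Y k t (hsP t ht) (hsU t ht)
  have hBY : ∀ (Y : ℝ) (k : ℕ),
      ∑ j ∈ range (k + 1), S k j * auxPhi l x Y j k 0 = B k x Y := by
    intro Y k
    rw [← hIter Y k 0 h0s, htaylor]
  -- the final chain for the m-th derivative
  have hDFchain : ∀ r, ∀ t ∈ s, HasDerivAt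
      (fun u => ∑ j ∈ range (m + 1), (S m j * (degFall l y j * x ^ j)) *
        (∑ k ∈ range (r + 1), (r.choose k : ℝ) *
          ((degFall l ((j : ℝ) - (m : ℝ) * l) (r - k) *
            (1 + l * u) ^ ((((j : ℝ) - (m : ℝ) * l) - ((r - k : ℕ) : ℝ) * l) / l)) *
           (∑ i ∈ range (k + 1), S k i * auxPhi l x (y - (j : ℝ) * l) i k u))))
      (∑ j ∈ range (m + 1), (S m j * (degFall l y j * x ^ j)) *
        (∑ k ∈ range (r + 2), ((r + 1).choose k : ℝ) *
          ((degFall l ((j : ℝ) - (m : ℝ) * l) (r + 1 - k) *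
            (1 + l * t) ^ ((((j : ℝ) - (m : ℝ) * l) - ((r + 1 - k : ℕ) : ℝ) * l) / l)) *
           (∑ i ∈ range (k + 1), S k i * auxPhi l x (y - (j : ℝ) * l) i k t)))) t := by
    intro r t ht
    apply HasDerivAt.fun_sum
    intro j _
    apply HasDerivAt.const_mul
    have hfj : ∀ k, ∀ u ∈ s, HasDerivAt
        (fun v => degFall l ((j : ℝ) - (m : ℝ) * l) k *
          (1 + l * v) ^ ((((j : ℝ) - (m : ℝ) * l) - (k : ℝ) * l) / l))
        (degFall l ((j : ℝ) - (m : ℝ) * l) (k + 1) *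
          (1 + l * u) ^ ((((j : ℝ) - (m : ℝ) * l) - ((k + 1 : ℕ) : ℝ) * l) / l)) u := by
      intro k u hu
      have h := chain_DA hl hsP ((j : ℝ) - (m : ℝ) * l) k u hu
      push_cast
      exact h
    have hgj : ∀ k, ∀ u ∈ s, HasDerivAt
        (fun v => ∑ i ∈ range (k + 1), S k i * auxPhi l x (y - (j : ℝ) * l) i k v)
        (∑ i ∈ range (k + 1 + 1), S (k + 1) i * auxPhi l x (y - (j : ℝ) * l) i (k + 1) u) u := by
      intro k u hu
      exact chain_Phi l x hl S hS (y - (j : ℝ) * l) k u (hsP u hu) (hsU u hu)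
    exact chain_mul hfj hgj r t ht
  have hDF0 : ∀ t ∈ s,
      (∑ j ∈ range (m + 1), (S m j * (degFall l y j * x ^ j)) *
        (∑ k ∈ range (0 + 1), ((0:ℕ).choose k : ℝ) *
          ((degFall l ((j : ℝ) - (m : ℝ) * l) (0 - k) *
            (1 + l * t) ^ ((((j : ℝ) - (m : ℝ) * l) - ((0 - k : ℕ) : ℝ) * l) / l)) *
           (∑ i ∈ range (k + 1), S k i * auxPhi l x (y - (j : ℝ) * l) i k t))))
      = ∑ j ∈ range (m + 1), S m j * auxPhi l x y j m t := by
    intro t _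
    apply Finset.sum_congr rfl
    intro j _
    norm_num [Finset.sum_range_one, auxPhi, degFall, S_zero_zero l S hS, Real.rpow_zero]
    ring
  -- main computation
  have hmain : B (n + m) x y =
      ∑ j ∈ range (m + 1), (S m j * (degFall l y j * x ^ j)) *
        (∑ k ∈ range (n + 1), (n.choose k : ℝ) *
          ((degFall l ((j : ℝ) - (m : ℝ) * l) (n - k) *
            (1 + l * (0:ℝ)) ^ ((((j : ℝ) - (m : ℝ) * l) - ((n - k : ℕ) : ℝ) * l) / l)) *
           (∑ i ∈ range (k + 1), S k i * auxPhi l x (y - (j : ℝ) * l) i k 0))) := by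
    have hev : iteratedDeriv m (auxH l x y) =ᶠ[nhds 0]
        (fun t => ∑ j ∈ range (m + 1), S m j * auxPhi l x y j m t) :=
      Filter.eventually_of_mem (hsopen.mem_nhds h0s) (fun u hu => hIter y m u hu)
    calc B (n + m) x y = iteratedDeriv (n + m) (auxH l x y) 0 := (htaylor y (n + m)).symm
      _ = iteratedDeriv n (iteratedDeriv m (auxH l x y)) 0 := by rw [iteratedDeriv_add_split]
      _ = iteratedDeriv n (fun t => ∑ j ∈ range (m + 1), S m j * auxPhi l x y j m t) 0 :=
          (eventuallyEq_iteratedDeriv hev n).eq_of_nhds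
      _ = _ := chain_iteratedDeriv hsopen hDF0 hDFchain n 0 h0s
  rw [hmain]
  apply Finset.sum_congr rfl
  intro j _
  rw [Finset.mul_sum]
  apply Finset.sum_congr rfl
  intro k _
  rw [hBY (y - (j : ℝ) * l) k]
  rw [show (1 + l * (0:ℝ)) = 1 by ring, Real.one_rpow]
  ring
end

section
/- For n ≥ 0 and r ≥ 0, the fully degenerate r-Bell polynomial satisfies B^{(r)}_{n,λ}(x) = Σ_{k=0}^{n} (1)_{k,λ} (x/(1+λx))^k S_{r,λ}(n+r, k+r), where S_{r,λ} are the degenerate r-Stirling numbers of the second kind. -/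
open Finset

open Finset Filter Real Topology
open scoped ENNReal NNReal

namespace RBellAux

/-- binomial series coefficient -/
noncomputable def bc (a : ℝ) (n : ℕ) : ℝ := (∏ i ∈ Finset.range n, (a - i)) / n.factorial

lemma bc_succ (a : ℝ) (n : ℕ) : bc a (n + 1) = bc a n * ((a - n) / (n + 1)) := by
  unfold bc
  rw [Finset.prod_range_succ, Nat.factorial_succ, div_mul_div_comm]
  push_cast
  rw [mul_comm ((n:ℝ) + 1) _]

lemma eventually_ratio {A ρ r : ℝ} (h : ρ < r) :
    ∀ᶠ n : ℕ in atTop, (A + n) * ρ ≤ r * n := by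
  obtain ⟨N, hN⟩ := exists_nat_ge (A * ρ / (r - ρ))
  filter_upwards [eventually_ge_atTop N] with n hn
  have hn' : (N : ℝ) ≤ n := by exact_mod_cast hn
  have h1 : A * ρ / (r - ρ) ≤ (n : ℝ) := hN.trans hn'
  have h2 : A * ρ ≤ (n : ℝ) * (r - ρ) := by
    rw [div_le_iff₀ (by linarith)] at h1; linarith
  nlinarith

lemma summable_bc_mul (a x : ℝ) (hx : |x| < 1) :
    Summable (fun n => bc a n * x ^ n) := by
  set r : ℝ := (1 + |x|) / 2 with hr
  have hxr : |x| < r := by rw [hr]; linarith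
  have hr1 : r < 1 := by rw [hr]; linarith
  apply summable_of_ratio_norm_eventually_le hr1
  have hev : ∀ᶠ n : ℕ in atTop, (|a| + n) * |x| ≤ r * n := eventually_ratio hxr
  filter_upwards [hev] with n hn
  have key : |bc a (n+1) * x ^ (n+1)| = (|a - n| * |x| / (n+1)) * |bc a n * x ^ n| := by
    rw [bc_succ, pow_succ]
    rw [abs_mul, abs_mul, abs_mul, abs_div, abs_mul]
    have : |((n : ℝ) + 1)| = (n : ℝ) + 1 := abs_of_pos (by positivity)
    rw [this]
    ring
  rw [Real.norm_eq_abs, Real.norm_eq_abs, key]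
  have han : |a - n| ≤ |a| + n := (abs_sub _ _).trans (by rw [Nat.abs_cast])
  have h1 : |a - n| * |x| / (n + 1) ≤ r := by
    rw [div_le_iff₀ (by positivity)]
    have : |a - n| * |x| ≤ (|a| + n) * |x| :=
      mul_le_mul_of_nonneg_right han (abs_nonneg x)
    have h2 : r * n ≤ r * (n + 1) := by nlinarith [hxr.trans_le (le_refl r), abs_nonneg x]
    nlinarith [abs_nonneg x, abs_nonneg (a - (n:ℝ))]
  exact mul_le_mul_of_nonneg_right h1 (abs_nonneg _)

lemma summable_bc_deriv (a ρ : ℝ) (hρ0 : 0 ≤ ρ) (hρ : ρ < 1) :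
    Summable (fun n : ℕ => |bc a n| * (n * ρ ^ (n - 1))) := by
  set r : ℝ := (1 + ρ) / 2 with hr
  have hxr : ρ < r := by rw [hr]; linarith
  have hr1 : r < 1 := by rw [hr]; linarith
  apply summable_of_ratio_norm_eventually_le hr1
  have hev : ∀ᶠ n : ℕ in atTop, (|a| + n) * ρ ≤ r * n := eventually_ratio hxr
  filter_upwards [hev, eventually_ge_atTop 1] with n hn hn1
  have key : |bc a (n+1)| * ((n+1) * ρ ^ n) = (|a - n| * ρ) * (|bc a n| * ρ ^ (n-1)) := by
    rw [bc_succ, abs_mul, abs_div]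
    have h1 : |((n : ℝ) + 1)| = (n : ℝ) + 1 := abs_of_pos (by positivity)
    have h2 : ρ ^ n = ρ * ρ ^ (n - 1) := by
      conv_lhs => rw [show n = (n - 1) + 1 from (Nat.succ_pred_eq_of_pos hn1).symm]
      rw [pow_succ]; ring
    rw [h1, h2]
    field_simp
  have hpos : ∀ m : ℕ, (0:ℝ) ≤ |bc a m| * (m * ρ ^ (m-1)) := fun m => by positivity
  rw [Real.norm_eq_abs, Real.norm_eq_abs, abs_of_nonneg (hpos _), abs_of_nonneg (hpos _),
    Nat.add_sub_cancel]
  push_cast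
  rw [key]
  have han : |a - n| ≤ |a| + n := (abs_sub _ _).trans (by rw [Nat.abs_cast])
  have h3 : |a - n| * ρ ≤ r * n := le_trans (mul_le_mul_of_nonneg_right han hρ0) hn
  calc |a - ↑n| * ρ * (|bc a n| * ρ ^ (n - 1)) ≤ r * n * (|bc a n| * ρ ^ (n-1)) := by
        apply mul_le_mul_of_nonneg_right h3 (by positivity)
    _ = r * (|bc a n| * (n * ρ ^ (n-1))) := by ring


lemma hasDerivAt_bcsum (a : ℝ) {x : ℝ} (hx : |x| < 1) :
    HasDerivAt (fun z : ℝ => ∑' n : ℕ, bc a n * z ^ n)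
      (∑' n : ℕ, bc a n * (n * x ^ (n - 1))) x := by
  set ρ : ℝ := (1 + |x|) / 2 with hρdef
  have hρ0 : 0 ≤ ρ := by positivity
  have hρ1 : ρ < 1 := by rw [hρdef]; linarith
  have hxρ : |x| < ρ := by rw [hρdef]; linarith
  have hρpos : 0 < ρ := lt_of_le_of_lt (abs_nonneg x) hxρ
  have hmem : x ∈ Set.Ioo (-ρ) ρ := by
    constructor <;> [linarith [neg_abs_le x]; linarith [le_abs_self x]]
  exact hasDerivAt_tsum_of_isPreconnected (summable_bc_deriv a ρ hρ0 hρ1) isOpen_Ioo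
    (convex_Ioo _ _).isPreconnected
    (fun n y _ => HasDerivAt.const_mul (bc a n) (hasDerivAt_pow n y))
    (fun n y hy => by
      have hyρ : |y| ≤ ρ := by
        rw [abs_le]; exact ⟨hy.1.le, hy.2.le⟩
      rw [Real.norm_eq_abs, abs_mul, abs_mul, abs_pow, Nat.abs_cast]
      gcongr)
    (Set.mem_Ioo.mpr ⟨by linarith, hρpos⟩)
    ((summable_bc_mul a 0 (by simp)).congr (fun n => rfl))
    hmem

lemma ode_bcsum (a : ℝ) {x : ℝ} (hx : |x| < 1) :
    (1 + x) * (∑' n : ℕ, bc a n * (n * x ^ (n - 1))) = a * ∑' n : ℕ, bc a n * x ^ n := by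
  have hsum1 : Summable (fun n : ℕ => bc a n * (n * x ^ (n - 1))) := by
    apply Summable.of_norm_bounded (summable_bc_deriv a |x| (abs_nonneg x) hx)
    intro n
    simp only [Real.norm_eq_abs, abs_mul, abs_pow, Nat.abs_cast]
    exact le_refl _
  set T : ℝ := ∑' n : ℕ, bc a n * (n * x ^ (n - 1)) with hT
  have hTsum : HasSum (fun n : ℕ => bc a n * (n * x ^ (n - 1))) T := hsum1.hasSum
  have hshift : HasSum (fun n : ℕ => bc a n * (a - n) * x ^ n) T := by
    have h0 := (hasSum_nat_add_iff' (f := fun n : ℕ => bc a n * (n * x ^ (n - 1))) 1).mpr hTsum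
    have he : (fun n : ℕ => bc a (n + 1) * ((n + 1 : ℕ) * x ^ ((n + 1) - 1)))
        = fun n : ℕ => bc a n * (a - n) * x ^ n := by
      funext n
      rw [Nat.add_sub_cancel, bc_succ]
      push_cast
      have hne : ((n:ℝ) + 1) ≠ 0 := by positivity
      field_simp
    simp only [Finset.range_one, Finset.sum_singleton, Nat.cast_zero, zero_mul, mul_zero,
      sub_zero] at h0
    rw [he] at h0
    exact h0
  have hx2 : HasSum (fun n : ℕ => bc a n * n * x ^ n) (x * T) := by
    have := hTsum.mul_left x
    have he : (fun n : ℕ => x * (bc a n * (n * x ^ (n - 1))))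
        = fun n : ℕ => bc a n * n * x ^ n := by
      funext n
      cases n with
      | zero => simp
      | succ m =>
        rw [Nat.add_sub_cancel, pow_succ]
        ring
    rwa [he] at this
  have hS : HasSum (fun n : ℕ => bc a n * x ^ n) (∑' n : ℕ, bc a n * x ^ n) :=
    (summable_bc_mul a x hx).hasSum
  have hcomb : HasSum (fun n : ℕ => a * (bc a n * x ^ n)) (T + x * T) := by
    have := hshift.add hx2
    have he : (fun n : ℕ => bc a n * (a - n) * x ^ n + bc a n * n * x ^ n)
        = fun n : ℕ => a * (bc a n * x ^ n) := by
      funext n; ring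
    rwa [he] at this
  have := hcomb.unique (hS.mul_left a)
  linarith [this]

/-- The real binomial series. -/
lemma hasSum_binomial (a : ℝ) {x : ℝ} (hx : |x| < 1) :
    HasSum (fun n : ℕ => bc a n * x ^ n) ((1 + x) ^ a) := by
  have h1x : ∀ z : ℝ, |z| < 1 → (0:ℝ) < 1 + z := fun z hz => by
    have := neg_abs_le z; linarith [abs_lt.mp hz]
  set F : ℝ → ℝ := fun z => ∑' n : ℕ, bc a n * z ^ n with hF
  set K : ℝ → ℝ := fun z => F z * (1 + z) ^ (-a) with hK
  have hKderiv : ∀ z : ℝ, |z| < 1 → HasDerivAt K 0 z := by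
    intro z hz
    have hz1 : (0:ℝ) < 1 + z := h1x z hz
    have hd1 : HasDerivAt F (∑' n : ℕ, bc a n * (n * z ^ (n - 1))) z := hasDerivAt_bcsum a hz
    have hd2 : HasDerivAt (fun y : ℝ => (1 + y) ^ (-a)) (-a * (1 + z) ^ (-a - 1)) z := by
      have hrw := Real.hasDerivAt_rpow_const (x := 1 + z) (p := -a) (Or.inl (ne_of_gt hz1))
      have hlin : HasDerivAt (fun y : ℝ => 1 + y) 1 z := (hasDerivAt_id z).const_add 1
      have := HasDerivAt.comp z hrw hlin
      simpa [Function.comp_def] using this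
    have hmul := hd1.mul hd2
    have hzero : (∑' n : ℕ, bc a n * (n * z ^ (n - 1))) * (1 + z) ^ (-a)
        + F z * (-a * (1 + z) ^ (-a - 1)) = 0 := by
      have hode := ode_bcsum a hz
      have hsplit : (1 + z) ^ (-a) = (1 + z) ^ (-a - 1) * (1 + z) := by
        nth_rewrite 3 [← Real.rpow_one (1 + z)]
        rw [← Real.rpow_add hz1]
        ring_nf
      rw [hsplit]
      linear_combination ((1 + z) ^ (-a - 1)) * hode
    rw [hzero] at hmul
    exact hmul
  -- K is constant on the ball
  have hKconst : ∀ z : ℝ, |z| < 1 → K z = K 0 := by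
    intro z hz
    rcases le_or_gt 0 z with hz0 | hz0
    · rcases eq_or_lt_of_le hz0 with h | h
      · rw [← h]
      · have key := constant_of_derivWithin_zero (f := K) (a := 0) (b := z)
          (fun w hw => by
            have hw1 : |w| < 1 := by
              rw [abs_lt]
              rcases hw with ⟨hw1, hw2⟩
              constructor <;> [linarith; linarith [abs_lt.mp hz]]
            exact (hKderiv w hw1).differentiableAt.differentiableWithinAt)
          (fun w hw => by
            have hw1 : |w| < 1 := by
              rw [abs_lt]
              rcases hw with ⟨hw1, hw2⟩
              constructor <;> [linarith; linarith [abs_lt.mp hz]]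
            exact ((hKderiv w hw1).hasDerivWithinAt).derivWithin
              ((uniqueDiffOn_Icc h) w (Set.mem_Icc.mpr ⟨hw.1, hw.2.le⟩)))
        exact key z (Set.mem_Icc.mpr ⟨hz0, le_refl z⟩)
    · have key := constant_of_derivWithin_zero (f := K) (a := z) (b := 0)
        (fun w hw => by
          have hw1 : |w| < 1 := by
            rw [abs_lt]
            rcases hw with ⟨hw1, hw2⟩
            constructor <;> [linarith [abs_lt.mp hz]; linarith]
          exact (hKderiv w hw1).differentiableAt.differentiableWithinAt)
        (fun w hw => by
          have hw1 : |w| < 1 := by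
            rw [abs_lt]
            rcases hw with ⟨hw1, hw2⟩
            constructor <;> [linarith [abs_lt.mp hz]; linarith]
          exact ((hKderiv w hw1).hasDerivWithinAt).derivWithin
            ((uniqueDiffOn_Icc hz0) w (Set.mem_Icc.mpr ⟨hw.1, hw.2.le⟩)))
      exact (key 0 (Set.mem_Icc.mpr ⟨hz0.le, le_refl 0⟩)).symm
  -- K 0 = 1
  have hF0 : F 0 = 1 := by
    have h0 : HasSum (fun n : ℕ => bc a n * (0:ℝ) ^ n) (bc a 0 * (0:ℝ) ^ 0) := by
      apply hasSum_single 0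
      intro n hn
      simp [zero_pow hn]
    have : bc a 0 * (0:ℝ) ^ 0 = 1 := by simp [bc]
    rw [this] at h0
    exact h0.tsum_eq
  have hK0 : K 0 = 1 := by
    simp only [hK, hF0]
    rw [show (1:ℝ) + 0 = 1 by ring, Real.one_rpow, one_mul]
  -- conclude
  have h1x' : (0:ℝ) < 1 + x := h1x x hx
  have hKx : F x * (1 + x) ^ (-a) = 1 := by
    have := hKconst x hx
    rw [hK0] at this
    exact this
  have hev : F x = (1 + x) ^ a := by
    have hmul : F x * ((1 + x) ^ (-a) * (1 + x) ^ a) = (1 + x) ^ a := by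
      rw [← mul_assoc, hKx, one_mul]
    rwa [← Real.rpow_add h1x', neg_add_cancel, Real.rpow_zero, mul_one] at hmul
  have := (summable_bc_mul a x hx).hasSum
  rwa [show (∑' n : ℕ, bc a n * x ^ n) = (1 + x) ^ a from hev] at this


/-- `degFall` version of the binomial series. -/
lemma hasSum_degFall {l : ℝ} (hl : l ≠ 0) (b t : ℝ) (ht : |l * t| < 1) :
    HasSum (fun n : ℕ => degFall l b n * t ^ n / n.factorial)
      ((1 + l * t) ^ (b / l)) := by
  unfold degFall
  have h := hasSum_binomial (b / l) ht
  have he : (fun n : ℕ => bc (b / l) n * (l * t) ^ n)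
      = fun n : ℕ => (∏ i ∈ Finset.range n, (b - (i:ℝ) * l)) * t ^ n / n.factorial := by
    funext n
    unfold bc
    rw [mul_pow]
    have hp : ∏ i ∈ Finset.range n, (b - (i:ℝ) * l)
        = ∏ i ∈ Finset.range n, (l * (b / l - i)) := by
      apply Finset.prod_congr rfl
      intro i _
      field_simp
    rw [hp, Finset.prod_mul_distrib, Finset.prod_const, Finset.card_range]
    ring
  rwa [he] at h

lemma prod_cast_sub (j κ : ℕ) :
    ∏ i ∈ Finset.range κ, ((j:ℝ) - i) = (j.descFactorial κ : ℝ) := by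
  induction κ with
  | zero => simp
  | succ m ih =>
    rw [Finset.prod_range_succ, ih, Nat.descFactorial_succ]
    rcases le_or_gt m j with h | h
    · push_cast [h]
      ring
    · rw [Nat.descFactorial_eq_zero_iff_lt.mpr h, Nat.sub_eq_zero_of_le h.le]
      simp

lemma choose_orth (k m : ℕ) :
    ∑ j ∈ Finset.range (k+1), (-1:ℝ)^(k-j) * (k.choose j) * (j.choose m)
      = if m = k then 1 else 0 := by
  rcases lt_or_ge k m with hmk | hmk
  · rw [if_neg (by omega)]
    apply Finset.sum_eq_zero
    intro j hj
    rw [Finset.mem_range] at hj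
    rw [Nat.choose_eq_zero_of_lt (show j < m by omega)]
    simp
  · -- m ≤ k
    have h0 : ∑ j ∈ Finset.Ico 0 m, (-1:ℝ)^(k-j) * (k.choose j) * (j.choose m) = 0 := by
      apply Finset.sum_eq_zero
      intro j hj
      rw [Finset.mem_Ico] at hj
      rw [Nat.choose_eq_zero_of_lt hj.2]
      simp
    have hsplit : ∑ j ∈ Finset.range (k+1), (-1:ℝ)^(k-j) * (k.choose j) * (j.choose m)
        = ∑ i ∈ Finset.range (k - m + 1), (-1:ℝ)^(k-(m+i)) * (k.choose (m+i)) * ((m+i).choose m) := by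
      rw [Finset.range_eq_Ico,
        ← Finset.sum_Ico_consecutive _ (Nat.zero_le m) (by omega : m ≤ k + 1), h0, zero_add,
        Finset.sum_Ico_eq_sum_range]
      have hkm : k + 1 - m = k - m + 1 := by omega
      rw [hkm]
    rw [hsplit]
    have hterm : ∀ i ∈ Finset.range (k - m + 1),
        (-1:ℝ)^(k-(m+i)) * (k.choose (m+i)) * ((m+i).choose m)
          = (k.choose m : ℝ) * ((-1:ℝ)^(k-m) * ((-1:ℝ)^i * ((k-m).choose i))) := by
      intro i hi
      rw [Finset.mem_range] at hi
      have hik : m + i ≤ k := by omega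
      have hcc : (k.choose (m+i)) * ((m+i).choose m) = k.choose m * (k-m).choose i := by
        have := Nat.choose_mul (n := k) (k := m + i) (s := m) (Nat.le_add_right m i)
        simpa using this
      have hsign : (-1:ℝ)^(k-(m+i)) = (-1:ℝ)^(k-m) * (-1:ℝ)^i := by
        have h1 : (k - (m+i)) + i = k - m := by omega
        have h2 : ((-1:ℝ))^i * ((-1:ℝ))^i = 1 := by
          rw [← pow_add, ← two_mul, pow_mul]; norm_num
        calc (-1:ℝ)^(k-(m+i)) = (-1:ℝ)^(k-(m+i)) * ((-1:ℝ)^i * (-1:ℝ)^i) := by rw [h2, mul_one]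
          _ = ((-1:ℝ)^(k-(m+i)) * (-1:ℝ)^i) * (-1:ℝ)^i := by ring
          _ = (-1:ℝ)^(k-m) * (-1:ℝ)^i := by rw [← pow_add, h1]
      calc (-1:ℝ)^(k-(m+i)) * (k.choose (m+i)) * ((m+i).choose m)
          = (-1:ℝ)^(k-(m+i)) * ((k.choose (m+i)) * ((m+i).choose m)) := by ring
        _ = (-1:ℝ)^(k-(m+i)) * ((k.choose m : ℝ) * ((k-m).choose i)) := by
            rw [← Nat.cast_mul, hcc]; push_cast; ring
        _ = (k.choose m : ℝ) * ((-1:ℝ)^(k-m) * ((-1:ℝ)^i * ((k-m).choose i))) := by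
            rw [hsign]; ring
    have halt : ∑ i ∈ Finset.range (k - m + 1), (-1:ℝ)^i * ((k-m).choose i)
        = if k - m = 0 then 1 else 0 := by
      rcases eq_or_ne (k - m) 0 with h0' | h0'
      · rw [if_pos h0', h0']
        simp
      · have hz := Int.alternating_sum_range_choose_of_ne h0'
        have hcast := congrArg (fun z : ℤ => (z : ℝ)) hz
        push_cast at hcast
        rw [if_neg h0']
        exact hcast
    rw [Finset.sum_congr rfl hterm, ← Finset.mul_sum, ← Finset.mul_sum]
    rcases eq_or_ne m k with h | h
    · subst h
      rw [halt, if_pos rfl, Nat.sub_self]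
      simp
    · rw [halt, if_neg (show ¬ k - m = 0 by omega), if_neg h]
      ring


lemma key_inversion {l : ℝ} {r : ℕ} {Sr : ℕ → ℕ → ℝ}
    (hSr : ∀ n : ℕ, ∀ z : ℝ, degFall l (z + r) n
      = ∑ k ∈ Finset.range (n + 1), Sr n k * ∏ i ∈ Finset.range k, (z - (i : ℝ)))
    (n k : ℕ) :
    ∑ j ∈ Finset.range (k+1), (-1:ℝ)^(k-j) * (k.choose j) * degFall l ((j:ℝ) + r) n
      = if k ≤ n then (k.factorial : ℝ) * Sr n k else 0 := by
  have hstep : ∀ j : ℕ, degFall l ((j:ℝ) + r) n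
      = ∑ κ ∈ Finset.range (n+1), Sr n κ * ((κ.factorial : ℝ) * (j.choose κ)) := by
    intro j
    rw [hSr n (j:ℝ)]
    apply Finset.sum_congr rfl
    intro κ _
    rw [prod_cast_sub j κ, Nat.descFactorial_eq_factorial_mul_choose]
    push_cast; ring
  calc ∑ j ∈ Finset.range (k+1), (-1:ℝ)^(k-j) * (k.choose j) * degFall l ((j:ℝ) + r) n
      = ∑ j ∈ Finset.range (k+1), ∑ κ ∈ Finset.range (n+1),
          Sr n κ * (κ.factorial : ℝ) * ((-1:ℝ)^(k-j) * (k.choose j) * (j.choose κ)) := by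
        apply Finset.sum_congr rfl; intro j _
        rw [hstep j, Finset.mul_sum]
        apply Finset.sum_congr rfl; intro κ _; ring
    _ = ∑ κ ∈ Finset.range (n+1), Sr n κ * (κ.factorial : ℝ) *
          (∑ j ∈ Finset.range (k+1), (-1:ℝ)^(k-j) * (k.choose j) * (j.choose κ)) := by
        rw [Finset.sum_comm]
        apply Finset.sum_congr rfl; intro κ _
        rw [Finset.mul_sum]
    _ = ∑ κ ∈ Finset.range (n+1), (if κ = k then Sr n κ * (κ.factorial : ℝ) else 0) := by
        apply Finset.sum_congr rfl; intro κ _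
        rw [choose_orth k κ, mul_ite, mul_one, mul_zero]
    _ = if k ≤ n then (k.factorial : ℝ) * Sr n k else 0 := by
        rw [Finset.sum_ite_eq' (Finset.range (n+1)) k (fun κ => Sr n κ * (κ.factorial : ℝ))]
        by_cases hkn : k ≤ n
        · rw [if_pos (Finset.mem_range.mpr (by omega)), if_pos hkn]
          ring
        · rw [if_neg (fun hmem => hkn (by
            have := Finset.mem_range.mp hmem; omega)), if_neg hkn]

lemma hasSum_D {l : ℝ} (hl : l ≠ 0) (r : ℕ) (k : ℕ) {t : ℝ} (ht : |l * t| < 1)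
    (hpos : (0:ℝ) < 1 + l * t) :
    HasSum (fun n : ℕ =>
      ((∑ j ∈ Finset.range (k+1), (-1:ℝ)^(k-j) * (k.choose j) * degFall l ((j:ℝ) + r) n)
        / k.factorial) * t ^ n / n.factorial)
      ((((1 + l*t) ^ (1/l) - 1) ^ k * ((1 + l*t) ^ (1/l)) ^ r) / k.factorial) := by
  have hj : ∀ j ∈ Finset.range (k+1),
      HasSum (fun n : ℕ => ((-1:ℝ)^(k-j) * (k.choose j)) * (degFall l ((j:ℝ) + r) n * t ^ n / n.factorial))
        (((-1:ℝ)^(k-j) * (k.choose j)) * ((1 + l*t) ^ ((((j:ℝ) + r))/l))) :=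
    fun j _ => (hasSum_degFall hl ((j:ℝ) + r) t ht).mul_left _
  have hsum := hasSum_sum hj
  have hmain := hsum.mul_left (1 / (k.factorial : ℝ))
  have hfun : (fun n : ℕ => (1 / (k.factorial : ℝ)) * ∑ j ∈ Finset.range (k+1),
        ((-1:ℝ)^(k-j) * (k.choose j)) * (degFall l ((j:ℝ) + r) n * t ^ n / n.factorial))
      = fun n : ℕ =>
        ((∑ j ∈ Finset.range (k+1), (-1:ℝ)^(k-j) * (k.choose j) * degFall l ((j:ℝ) + r) n)
          / k.factorial) * t ^ n / n.factorial := by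
    funext n
    rw [Finset.sum_div, Finset.sum_mul, Finset.sum_div, Finset.mul_sum]
    apply Finset.sum_congr rfl
    intro j _
    ring
  rw [hfun] at hmain
  have hval : (1 / (k.factorial : ℝ)) * ∑ j ∈ Finset.range (k+1),
        ((-1:ℝ)^(k-j) * (k.choose j)) * ((1 + l*t) ^ ((((j:ℝ) + r))/l))
      = (((1 + l*t) ^ (1/l) - 1) ^ k * ((1 + l*t) ^ (1/l)) ^ r) / k.factorial := by
    set E : ℝ := (1 + l*t) ^ (1/l) with hE
    have hEj : ∀ j : ℕ, (1 + l*t) ^ (((j:ℝ) + r)/l) = E ^ j * E ^ r := by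
      intro j
      have h1 : ((j:ℝ) + r)/l = (1/l) * (((j + r : ℕ)) : ℝ) := by push_cast; ring
      rw [h1, Real.rpow_mul hpos.le, Real.rpow_natCast, pow_add]
    have h2 : ∑ j ∈ Finset.range (k+1),
        ((-1:ℝ)^(k-j) * (k.choose j)) * ((1 + l*t) ^ ((((j:ℝ) + r))/l))
        = (∑ j ∈ Finset.range (k+1), E ^ j * (-1:ℝ)^(k-j) * (k.choose j)) * E ^ r := by
      rw [Finset.sum_mul]
      apply Finset.sum_congr rfl
      intro j _
      rw [hEj j]
      ring
    rw [h2, ← add_pow E (-1) k]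
    rw [show E + (-1) = E - 1 by ring]
    ring
  rw [hval] at hmain
  exact hmain

lemma choose_le_two_pow_real (n k : ℕ) : (n.choose k : ℝ) ≤ 2 ^ n := by
  have h : n.choose k ≤ 2 ^ n := by
    rcases le_or_gt k n with h | h
    · calc n.choose k ≤ ∑ i ∈ Finset.range (n+1), n.choose i :=
          Finset.single_le_sum (f := fun i => n.choose i) (fun i _ => Nat.zero_le _)
            (Finset.mem_range.mpr (by omega))
        _ = 2 ^ n := Nat.sum_range_choose n
    · rw [Nat.choose_eq_zero_of_lt h]; exact Nat.zero_le _
  calc (n.choose k : ℝ) ≤ ((2 ^ n : ℕ) : ℝ) := by exact_mod_cast h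
    _ = 2 ^ n := by push_cast; rfl

lemma abs_degFall_le (l b c : ℝ) (hb : |b| ≤ c) (n : ℕ) :
    |degFall l b n| ≤ ∏ i ∈ Finset.range n, (c + i * |l|) := by
  rw [degFall, Finset.abs_prod]
  apply Finset.prod_le_prod (fun i _ => abs_nonneg _)
  intro i _
  calc |b - (i:ℝ)*l| ≤ |b| + |(i:ℝ)*l| := abs_sub _ _
    _ = |b| + i * |l| := by rw [abs_mul, Nat.abs_cast]
    _ ≤ c + i*|l| := by linarith

lemma prod_one_add_le (l : ℝ) (k : ℕ) :
    ∏ i ∈ Finset.range k, (1 + (i:ℝ) * |l|) ≤ (max 1 |l|) ^ k * k.factorial := by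
  set M : ℝ := max 1 |l| with hM
  have hM1 : (1:ℝ) ≤ M := le_max_left _ _
  have hMl : |l| ≤ M := le_max_right _ _
  calc ∏ i ∈ Finset.range k, (1 + (i:ℝ) * |l|)
      ≤ ∏ i ∈ Finset.range k, (M * (1 + i)) := by
        apply Finset.prod_le_prod (fun i _ => by positivity)
        intro i _
        have : (1:ℝ) + i * |l| ≤ M + i * M := by
          have := mul_le_mul_of_nonneg_left hMl (show (0:ℝ) ≤ (i:ℝ) from Nat.cast_nonneg i)
          linarith
        linarith [this]
        -- M + i*M = M*(1+i)
    _ = M ^ k * k.factorial := by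
        rw [Finset.prod_mul_distrib, Finset.prod_const, Finset.card_range]
        congr 1
        have : ∏ i ∈ Finset.range k, ((1:ℝ) + i) = ∏ i ∈ Finset.range k, (((i + 1 : ℕ)) : ℝ) := by
          apply Finset.prod_congr rfl; intro i _; push_cast; ring
        rw [this, ← Nat.cast_prod, Finset.prod_range_add_one_eq_factorial]

lemma prod_range_add_eq_desc (a n : ℕ) :
    ∏ i ∈ Finset.range n, (a + 1 + i) = (a + n).descFactorial n := by
  rw [Nat.descFactorial_eq_prod_range, ← Finset.prod_range_reflect]
  apply Finset.prod_congr rfl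
  intro i hi
  rw [Finset.mem_range] at hi
  omega

lemma prod_shift_le (l : ℝ) (a n : ℕ) :
    ∏ i ∈ Finset.range n, ((a:ℝ) + i * |l|)
      ≤ (max 1 |l|) ^ n * (n.factorial : ℝ) * ((a + n).choose n) := by
  set M : ℝ := max 1 |l| with hM
  have hM1 : (1:ℝ) ≤ M := le_max_left _ _
  have hMl : |l| ≤ M := le_max_right _ _
  calc ∏ i ∈ Finset.range n, ((a:ℝ) + i * |l|)
      ≤ ∏ i ∈ Finset.range n, (M * ((a:ℝ) + 1 + i)) := by
        apply Finset.prod_le_prod (fun i _ => by positivity)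
        intro i _
        have h1 : (i:ℝ) * |l| ≤ i * M := mul_le_mul_of_nonneg_left hMl (Nat.cast_nonneg i)
        have h2 : (a:ℝ) ≤ M * (a + 1) := by nlinarith [show (0:ℝ) ≤ (a:ℝ) from Nat.cast_nonneg a]
        nlinarith [show (0:ℝ) ≤ (i:ℝ) from Nat.cast_nonneg i, show (0:ℝ) ≤ (a:ℝ) from Nat.cast_nonneg a]
    _ = M ^ n * ∏ i ∈ Finset.range n, ((a:ℝ) + 1 + i) := by
        rw [Finset.prod_mul_distrib, Finset.prod_const, Finset.card_range]
    _ = M ^ n * (n.factorial : ℝ) * ((a + n).choose n) := by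
        have : ∏ i ∈ Finset.range n, ((a:ℝ) + 1 + i)
            = (((a + n).descFactorial n : ℕ) : ℝ) := by
          rw [← prod_range_add_eq_desc a n]
          push_cast
          rfl
        rw [this, Nat.descFactorial_eq_factorial_mul_choose]
        push_cast
        ring


lemma hasFPowerSeriesAt_of_hasSum (c : ℕ → ℝ) (f : ℝ → ℝ) (ε : ℝ) (hε : 0 < ε)
    (h : ∀ t : ℝ, |t| < ε → HasSum (fun n => c n * t ^ n) (f t)) :
    HasFPowerSeriesAt f (FormalMultilinearSeries.ofScalars ℝ c) 0 := by
  set p := FormalMultilinearSeries.ofScalars ℝ c with hp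
  have hnorm : ∀ n, ‖p n‖ = |c n| := fun n => by
    rw [hp, FormalMultilinearSeries.ofScalars_norm, Real.norm_eq_abs]
  set ε2 : NNReal := Real.toNNReal (ε / 2) with hε2
  have hε2pos : (0:ℝ) < ε / 2 := by linarith
  have hε2' : (ε2 : ℝ) = ε / 2 := Real.coe_toNNReal _ hε2pos.le
  refine ⟨(ε2 : ℝ≥0∞), ?_, ?_, ?_⟩
  · -- radius
    apply FormalMultilinearSeries.le_radius_of_tendsto (l := 0)
    have hsum := h (ε / 2) (by rw [abs_of_pos hε2pos]; linarith)
    have htend := hsum.summable.tendsto_atTop_zero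
    have habs := htend.abs
    rw [abs_zero] at habs
    apply habs.congr
    intro n
    rw [hnorm n, hε2', abs_mul, abs_pow, abs_of_pos hε2pos]
  · rw [ENNReal.coe_pos, ← NNReal.coe_pos, hε2']
    exact hε2pos
  · intro y hy
    rw [mem_emetric_ball_zero_iff, enorm_eq_nnnorm, ENNReal.coe_lt_coe, ← NNReal.coe_lt_coe, coe_nnnorm,
      Real.norm_eq_abs, hε2'] at hy
    have hy' : |y| < ε := by linarith
    have hS := h y hy'
    have happ : (fun n => p n fun _ => y) = fun n => c n * y ^ n := by
      funext n
      rw [hp, FormalMultilinearSeries.ofScalars_apply_eq, smul_eq_mul]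
    rw [zero_add, happ]
    exact hS

lemma coeff_unique (c d : ℕ → ℝ) (f : ℝ → ℝ) (ε : ℝ) (hε : 0 < ε)
    (hc : ∀ t : ℝ, |t| < ε → HasSum (fun n => c n * t ^ n) (f t))
    (hd : ∀ t : ℝ, |t| < ε → HasSum (fun n => d n * t ^ n) (f t)) : c = d := by
  have h1 := hasFPowerSeriesAt_of_hasSum c f ε hε hc
  have h2 := hasFPowerSeriesAt_of_hasSum d f ε hε hd
  have := h1.eq_formalMultilinearSeries h2
  exact FormalMultilinearSeries.ofScalars_series_injective ℝ ℝ this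

end RBellAux



open RBellAux in
set_option maxHeartbeats 1000000 in
/-- `B^{(r)}_{n,λ}(x) = Σ_{k=0}^n (1)_{k,λ} (x/(1+λx))^k S_{r,λ}(n+r,k+r)`, where the fully
degenerate r-Bell polynomials are defined by the EGF
`e_λ(x)⁻¹ e_λ(x e_λ(t)) e_λ(t)^r = Σ B^{(r)}_{n,λ}(x) tⁿ/n!`, and the degenerate
r-Stirling numbers `Sr n k = S_{r,λ}(n+r,k+r)` are characterized by
`(z+r)_{n,λ} = Σ_k S_{r,λ}(n+r,k+r) z(z-1)⋯(z-k+1)`. -/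
theorem fully_degenerate_rBell_finite_sum (l : ℝ) (hl : l ≠ 0) (r : ℕ)
    (Sr : ℕ → ℕ → ℝ)
    (hSr : ∀ n : ℕ, ∀ z : ℝ,
      degFall l (z + r) n =
        ∑ k ∈ Finset.range (n + 1), Sr n k * ∏ i ∈ Finset.range k, (z - (i : ℝ)))
    (B : ℕ → ℝ → ℝ)
    (hB : ∀ z : ℝ, 0 < 1 + l * z → ∃ ε > 0, ∀ t : ℝ, |t| < ε →
      HasSum (fun n : ℕ => B n z * t ^ n / (n.factorial : ℝ))
        (((1 + l * z) ^ (1 / l))⁻¹ * (1 + l * (z * (1 + l * t) ^ (1 / l))) ^ (1 / l) *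
          (1 + l * t) ^ ((r : ℝ) / l)))
    (x : ℝ) (hx : 0 < 1 + l * x) (n : ℕ) :
    B n x = ∑ k ∈ Finset.range (n + 1),
      degFall l 1 k * (x / (1 + l * x)) ^ k * Sr n k := by
  classical
  set y : ℝ := x / (1 + l * x) with hy
  set M : ℝ := max 1 |l| with hM
  have hM1 : (1:ℝ) ≤ M := le_max_left _ _
  have hMl : |l| ≤ M := le_max_right _ _
  have hM0 : (0:ℝ) < M := lt_of_lt_of_le one_pos hM1
  -- the explicit inverse formula
  set Dn : ℕ → ℕ → ℝ := fun n k =>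
    (∑ j ∈ Finset.range (k+1), (-1:ℝ)^(k-j) * (k.choose j) * degFall l ((j:ℝ) + r) n)
      / k.factorial with hDn
  have hDval : ∀ n k : ℕ, Dn n k = if k ≤ n then Sr n k else 0 := by
    intro n k
    have hfac : (k.factorial : ℝ) ≠ 0 := Nat.cast_ne_zero.mpr k.factorial_ne_zero
    rw [hDn]
    simp only []
    rw [key_inversion hSr n k]
    by_cases hkn : k ≤ n
    · rw [if_pos hkn, if_pos hkn, mul_comm, mul_div_assoc, div_self hfac, mul_one]
    · rw [if_neg hkn, if_neg hkn, zero_div]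
  obtain ⟨ε₀, hε₀, hBx⟩ := hB x hx
  -- continuity: choose δ so that |l * (y * ((1+l*t)^(1/l) - 1))| < 1
  have hcont : ∀ᶠ t : ℝ in nhds 0, |l * (y * ((1 + l * t) ^ (1/l) - 1))| < 1 := by
    have h1 : Filter.Tendsto (fun t : ℝ => 1 + l * t) (nhds 0) (nhds 1) := by
      have hcts : Continuous (fun t : ℝ => 1 + l * t) := by continuity
      have h := hcts.tendsto 0
      simpa using h
    have h2 : ContinuousAt (fun u : ℝ => u ^ (1/l)) 1 :=
      Real.continuousAt_rpow_const 1 (1/l) (Or.inl one_ne_zero)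
    have h3 : Filter.Tendsto (fun t : ℝ => (1 + l * t) ^ (1/l)) (nhds 0) (nhds 1) := by
      have := h2.tendsto.comp h1
      simpa [Function.comp_def, Real.one_rpow] using this
    have h4 : Filter.Tendsto (fun t : ℝ => l * (y * ((1 + l * t) ^ (1/l) - 1)))
        (nhds 0) (nhds 0) := by
      have h5 : Filter.Tendsto (fun t : ℝ => (1 + l * t) ^ (1/l) - 1) (nhds 0) (nhds 0) := by
        have := h3.sub_const 1
        simpa using this
      have h6 := (h5.const_mul y).const_mul l
      simpa using h6
    have h7 := h4.abs
    rw [abs_zero] at h7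
    exact h7.eventually_lt_const one_pos
  rw [Metric.eventually_nhds_iff] at hcont
  obtain ⟨δ, hδpos, hδ⟩ := hcont
  set ε : ℝ := min ε₀ (min δ (1/(8*M^2*(|y|+1)))) with hε
  have hεpos : 0 < ε := by
    apply lt_min hε₀
    apply lt_min hδpos
    positivity
  set E : ℝ → ℝ := fun t => (1 + l * t) ^ (1/l) with hEdef
  set f : ℝ → ℝ := fun t => ((1 + l * x) ^ (1 / l))⁻¹ *
      (1 + l * (x * (1 + l * t) ^ (1 / l))) ^ (1 / l) * (1 + l * t) ^ ((r : ℝ) / l) with hf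
  set bseq : ℕ → ℝ := fun n => ∑ k ∈ Finset.range (n+1), degFall l 1 k * y^k * Sr n k with hbseq
  -- Step 1 : B-series
  have hasum : ∀ t : ℝ, |t| < ε → HasSum (fun n : ℕ => (B n x / n.factorial) * t ^ n) (f t) := by
    intro t ht
    have := hBx t (lt_of_lt_of_le ht (min_le_left _ _))
    have heq : (fun n : ℕ => B n x * t ^ n / (n.factorial : ℝ))
        = fun n : ℕ => (B n x / n.factorial) * t ^ n := by
      funext m; ring
    rw [heq] at this
    simp only [hf]
    exact this
  -- Step 2 : b-series
  have hbsum : ∀ t : ℝ, |t| < ε → HasSum (fun n : ℕ => (bseq n / n.factorial) * t ^ n) (f t) := by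
    intro t ht
    have hy1 : (0:ℝ) < |y| + 1 := by positivity
    have ht8 : |t| < 1/(8*M^2*(|y|+1)) :=
      lt_of_lt_of_le ht ((min_le_right _ _).trans (min_le_right _ _))
    have htδ : |t| < δ := lt_of_lt_of_le ht ((min_le_right _ _).trans (min_le_left _ _))
    have hts : 8*M^2*(|y|+1)*|t| < 1 := by
      rw [lt_div_iff₀ (by positivity)] at ht8
      calc 8*M^2*(|y|+1)*|t| = |t| * (8*M^2*(|y|+1)) := by ring
        _ < 1 := ht8
    have hfactor : 2*M ≤ 8*M^2*(|y|+1) := by nlinarith [abs_nonneg y, hM1, hM0]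
    have hMt : 2*M*|t| < 1 := by
      have h := mul_le_mul_of_nonneg_right hfactor (abs_nonneg t)
      linarith
    have hlfac : |l| * |t| ≤ 2*M*|t| := by
      have : |l| ≤ 2*M := by linarith
      exact mul_le_mul_of_nonneg_right this (abs_nonneg t)
    have hlt1 : |l * t| < 1 := by
      rw [abs_mul]
      linarith
    have hpos : (0:ℝ) < 1 + l * t := by
      have := abs_lt.mp hlt1
      linarith [this.1]
    have hw1 : |l * (y * ((1 + l * t) ^ (1/l) - 1))| < 1 := by
      apply hδ
      rw [Real.dist_eq, sub_zero]
      exact htδ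
    have hE0 : (0:ℝ) < E t := Real.rpow_pos_of_pos hpos _
    have h1yw : (0:ℝ) < 1 + l * (y * (E t - 1)) := by
      have := abs_lt.mp hw1
      simp only [hEdef] at *
      linarith [this.1]
    -- the double-indexed family
    set G : ℕ × ℕ → ℝ := fun p =>
      (degFall l 1 p.1 * y ^ p.1) * (Dn (p.1 + p.2) p.1 * t ^ (p.1 + p.2)
        / ((p.1 + p.2).factorial : ℝ)) with hG
    -- summability of G
    have hGbound : ∀ p : ℕ × ℕ, ‖G p‖ ≤
        2^r * ((8*M^2*(|y|+1)*|t|)^p.1 * (2*M*|t|)^p.2) := by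
      rintro ⟨k, m⟩
      set nn := k + m with hnn
      have hfk : (0:ℝ) < (k.factorial : ℝ) := by exact_mod_cast k.factorial_pos
      have hfn : (0:ℝ) < (nn.factorial : ℝ) := by exact_mod_cast nn.factorial_pos
      have h1 : |degFall l 1 k| ≤ M^k * k.factorial :=
        (abs_degFall_le l 1 1 (by norm_num) k).trans (prod_one_add_le l k)
      have h2 : |∑ j ∈ Finset.range (k+1), (-1:ℝ)^(k-j) * (k.choose j) * degFall l ((j:ℝ) + r) nn|
          ≤ 2^k * (M^nn * (nn.factorial : ℝ) * (((k+r+nn).choose nn : ℕ) : ℝ)) := by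
        calc |∑ j ∈ Finset.range (k+1), (-1:ℝ)^(k-j) * (k.choose j) * degFall l ((j:ℝ) + r) nn|
            ≤ ∑ j ∈ Finset.range (k+1), |(-1:ℝ)^(k-j) * (k.choose j) * degFall l ((j:ℝ) + r) nn| :=
              Finset.abs_sum_le_sum_abs _ _
          _ ≤ ∑ j ∈ Finset.range (k+1), (k.choose j : ℝ) *
                (M^nn * (nn.factorial : ℝ) * (((k+r+nn).choose nn : ℕ) : ℝ)) := by
              apply Finset.sum_le_sum
              intro j hj
              rw [Finset.mem_range, Nat.lt_succ_iff] at hj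
              rw [abs_mul, abs_mul, abs_pow, abs_neg, abs_one, one_pow, one_mul, Nat.abs_cast]
              apply mul_le_mul_of_nonneg_left _ (Nat.cast_nonneg _)
              have hjb : |(j:ℝ) + r| ≤ ((k + r : ℕ) : ℝ) := by
                rw [abs_of_nonneg (by positivity)]
                push_cast
                have : (j:ℝ) ≤ k := by exact_mod_cast hj
                linarith
              calc |degFall l ((j:ℝ) + r) nn|
                  ≤ ∏ i ∈ Finset.range nn, (((k+r : ℕ):ℝ) + i * |l|) :=
                    abs_degFall_le l _ _ hjb nn
                _ ≤ M ^ nn * (nn.factorial : ℝ) * (((k+r+nn).choose nn : ℕ) : ℝ) := by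
                    have hps := prod_shift_le l (k+r) nn
                    rw [← hM] at hps
                    exact hps
          _ = 2^k * (M^nn * (nn.factorial : ℝ) * (((k+r+nn).choose nn : ℕ) : ℝ)) := by
              rw [← Finset.sum_mul]
              congr 1
              rw [← Nat.cast_sum]
              rw [Nat.sum_range_choose]
              push_cast
              rfl
      have hGabs : ‖G (k, m)‖ = |degFall l 1 k| * |y|^k *
          (|∑ j ∈ Finset.range (k+1), (-1:ℝ)^(k-j) * (k.choose j) * degFall l ((j:ℝ) + r) nn|
            / (k.factorial : ℝ)) * |t|^nn / (nn.factorial : ℝ) := by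
        simp only [hG, hDn, Real.norm_eq_abs, abs_div, abs_mul, abs_pow, Nat.abs_cast]
        ring
      rw [hGabs]
      have hC : (((k+r+nn).choose nn : ℕ) : ℝ) ≤ 2^(k+r+nn) := choose_le_two_pow_real _ _
      calc |degFall l 1 k| * |y|^k *
          (|∑ j ∈ Finset.range (k+1), (-1:ℝ)^(k-j) * (k.choose j) * degFall l ((j:ℝ) + r) nn|
            / (k.factorial : ℝ)) * |t|^nn / (nn.factorial : ℝ)
          ≤ (M^k * k.factorial) * |y|^k *
            ((2^k * (M^nn * (nn.factorial : ℝ) * (((k+r+nn).choose nn : ℕ) : ℝ)))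
              / (k.factorial : ℝ)) * |t|^nn / (nn.factorial : ℝ) := by
            gcongr <;> positivity
          _ = (2*M*|y|)^k * ((((k+r+nn).choose nn : ℕ) : ℝ) * (M*|t|)^nn) := by
            field_simp
            ring
          _ ≤ (2*M*|y|)^k * ((2:ℝ)^(k+r+nn) * (M*|t|)^nn) := by
            gcongr <;> positivity
          _ = 2^r * ((8*M^2*(|y| * |t|))^k * (2*M*|t|)^m) := by
            rw [hnn, mul_pow (8*M^2) (|y| * |t|) k, mul_pow 8 (M^2) k,
              show (8:ℝ)^k = 2^k*(2^k*2^k) from by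
                rw [show (8:ℝ) = 2*(2*2) from by norm_num, mul_pow, mul_pow]]
            ring
          _ ≤ 2^r * ((8*M^2*(|y|+1)*|t|)^k * (2*M*|t|)^m) := by
            apply mul_le_mul_of_nonneg_left _ (by positivity : (0:ℝ) ≤ 2^r)
            apply mul_le_mul_of_nonneg_right _ (by positivity)
            apply pow_le_pow_left₀ (by positivity)
            have h1 : |y| * |t| ≤ (|y|+1) * |t| :=
              mul_le_mul_of_nonneg_right (by linarith) (abs_nonneg t)
            have h2 := mul_le_mul_of_nonneg_left h1 (by positivity : (0:ℝ) ≤ 8*M^2)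
            linarith
    have hGsummable : Summable G := by
      apply Summable.of_norm_bounded ?_ hGbound
      have hA0 : (0:ℝ) ≤ 8*M^2*(|y|+1)*|t| := by positivity
      have hB0 : (0:ℝ) ≤ 2*M*|t| := by positivity
      have hgeom := (summable_geometric_of_lt_one hA0 hts).mul_of_nonneg
        (summable_geometric_of_lt_one hB0 hMt)
        (fun k => by positivity) (fun m => by positivity)
      exact hgeom.mul_left _
    -- fibers over k
    have hDsum : ∀ k : ℕ, HasSum (fun nn : ℕ => Dn nn k * t^nn / (nn.factorial : ℝ))
        (((E t - 1)^k * (E t)^r) / (k.factorial : ℝ)) := by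
      intro k
      have hD := hasSum_D hl r k hlt1 hpos
      simp only [hDn, hEdef]
      exact hD
    have hfiber : ∀ k : ℕ, HasSum (fun m => G (k, m))
        ((degFall l 1 k * y^k) * (((E t - 1)^k * (E t)^r) / (k.factorial : ℝ))) := by
      intro k
      set F : ℕ → ℝ := fun nn => (degFall l 1 k * y^k) * (Dn nn k * t^nn / (nn.factorial : ℝ))
        with hF
      have hFsum : HasSum F ((degFall l 1 k * y^k) * (((E t - 1)^k * (E t)^r) / (k.factorial : ℝ))) :=
        (hDsum k).mul_left _
      have hvanish : ∑ i ∈ Finset.range k, F i = 0 := by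
        apply Finset.sum_eq_zero
        intro i hi
        rw [Finset.mem_range] at hi
        simp only [hF]
        rw [hDval i k, if_neg (by omega)]
        ring
      have hshift := (hasSum_nat_add_iff' (f := F) k).mpr hFsum
      rw [hvanish, sub_zero] at hshift
      have heq : (fun m : ℕ => F (m + k)) = fun m : ℕ => G (k, m) := by
        funext m
        simp only [hG, hF]
        rw [Nat.add_comm m k]
      rwa [heq] at hshift
    -- series in k
    have hkseries : HasSum (fun k : ℕ => (degFall l 1 k * y^k) *
        (((E t - 1)^k * (E t)^r) / (k.factorial : ℝ)))
        ((1 + l * (y * (E t - 1))) ^ (1/l) * (E t)^r) := by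
      have hbase := hasSum_degFall hl 1 (y * (E t - 1)) (by simpa only [hEdef] using hw1)
      have := hbase.mul_right ((E t)^r)
      have heq : (fun k : ℕ => degFall l 1 k * (y * (E t - 1))^k / (k.factorial : ℝ) * (E t)^r)
          = fun k : ℕ => (degFall l 1 k * y^k) * (((E t - 1)^k * (E t)^r) / (k.factorial : ℝ)) := by
        funext k
        rw [mul_pow]
        ring
      rwa [heq] at this
    -- combine
    have hGhas : HasSum G ((1 + l * (y * (E t - 1))) ^ (1/l) * (E t)^r) := by
      have h1 := hGsummable.hasSum
      have h2 := h1.prod_fiberwise hfiber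
      rwa [h2.unique hkseries] at h1
    -- antidiagonal fibers
    have hsig : HasSum (fun q : (Σ nn : ℕ, {p : ℕ × ℕ // p ∈ antidiagonal nn}) =>
        G (Finset.HasAntidiagonal.sigmaAntidiagonalEquivProd q))
        ((1 + l * (y * (E t - 1))) ^ (1/l) * (E t)^r) :=
      (Equiv.hasSum_iff _).mpr hGhas
    have hnfiber : HasSum (fun nn : ℕ => ∑ p ∈ (antidiagonal nn).attach, G p)
        ((1 + l * (y * (E t - 1))) ^ (1/l) * (E t)^r) := by
      apply hsig.sigma
      intro nn
      exact hasSum_fintype _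
    have hrowval : ∀ nn : ℕ, (∑ p ∈ (antidiagonal nn).attach, G (p : ℕ × ℕ))
        = (bseq nn / (nn.factorial : ℝ)) * t^nn := by
      intro nn
      rw [Finset.sum_attach (antidiagonal nn) (fun p => G p)]
      rw [Finset.Nat.sum_antidiagonal_eq_sum_range_succ_mk]
      simp only [hbseq]
      rw [Finset.sum_div, Finset.sum_mul]
      apply Finset.sum_congr rfl
      intro k hk
      rw [Finset.mem_range, Nat.lt_succ_iff] at hk
      simp only [hG]
      rw [show k + (nn - k) = nn from by omega]
      rw [hDval nn k, if_pos hk]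
      ring
    have hbhas : HasSum (fun nn : ℕ => (bseq nn / (nn.factorial : ℝ)) * t^nn)
        ((1 + l * (y * (E t - 1))) ^ (1/l) * (E t)^r) := by
      have := hnfiber
      simp_rw [hrowval] at this
      exact this
    -- identify the value with f t
    have hxne : (1 + l * x) ≠ 0 := ne_of_gt hx
    have heq1 : 1 + l * (y * (E t - 1)) = (1 + l * (x * E t)) / (1 + l * x) := by
      rw [hy]
      field_simp
      ring
    have h1lxE : (0:ℝ) < 1 + l * (x * E t) := by
      have h := h1yw
      rw [heq1] at h
      have := mul_pos h hx
      rwa [div_mul_cancel₀ _ hxne] at this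
    have hval : (1 + l * (y * (E t - 1))) ^ (1/l) * (E t)^r = f t := by
      rw [heq1, Real.div_rpow h1lxE.le hx.le]
      have hEr : (E t)^r = (1 + l * t) ^ ((r:ℝ) / l) := by
        simp only [hEdef]
        rw [← Real.rpow_natCast ((1 + l * t) ^ (1/l)) r, ← Real.rpow_mul hpos.le]
        congr 1
        ring
      rw [hEr]
      simp only [hf]
      rw [div_eq_mul_inv]
      ring
    rw [hval] at hbhas
    exact hbhas
  -- uniqueness of coefficients
  have huniq := coeff_unique (fun n => B n x / n.factorial) (fun n => bseq n / n.factorial)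
    f ε hεpos hasum hbsum
  have hn := congrFun huniq n
  have hfac : ((n.factorial : ℝ)) ≠ 0 := Nat.cast_ne_zero.mpr n.factorial_ne_zero
  have hBn : B n x = bseq n := by
    have := hn
    field_simp at this
    exact this
  rw [hBn]
end

section
/- For n, m ≥ 0, the classical two-variable Bell polynomials defined by e^{x(y e^t − 1)} = Σ_{n≥0} φ_n(x,y) t^n/n! satisfy φ_{n+m}(x,y) = Σ_{j=0}^{m} Σ_{k=0}^{n} S(m,j) C(n,k) j^{n−k} y^j x^j φ_k(x,y), where S(m,j) are the Stirling numbers of the second kind. -/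
open Finset

private lemma summable_abs_pow (c : ℝ) (p : ℕ) :
    Summable (fun i : ℕ => |c| ^ i * (i : ℝ) ^ p / (i.factorial : ℝ)) := by
  refine Summable.of_nonneg_of_le (fun i => by positivity) (fun i => ?_)
    (Real.summable_pow_div_factorial ((2:ℝ) ^ p * |c|))
  have h1 : (i : ℝ) ^ p ≤ ((2:ℝ) ^ p) ^ i := by
    rw [← pow_mul, mul_comm p i, pow_mul]
    refine pow_le_pow_left₀ (by positivity) ?_ p
    exact_mod_cast (Nat.lt_two_pow_self (n := i)).le
  calc |c| ^ i * (i:ℝ) ^ p / (i.factorial : ℝ)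
      = (i:ℝ) ^ p * |c| ^ i / (i.factorial : ℝ) := by ring
    _ ≤ ((2:ℝ)^p) ^ i * |c| ^ i / (i.factorial : ℝ) := by
        gcongr
    _ = ((2:ℝ)^p * |c|) ^ i / (i.factorial : ℝ) := by rw [mul_pow]

private lemma summable_main (c : ℝ) (p : ℕ) :
    Summable (fun i : ℕ => c ^ i * (i:ℝ) ^ p / (i.factorial : ℝ)) := by
  rw [← summable_abs_iff]
  refine (summable_abs_pow c p).congr fun i => ?_
  rw [abs_div, abs_mul, abs_pow, abs_pow, Nat.abs_cast, Nat.abs_cast]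

private lemma prod_range_cast (l j : ℕ) :
    ∏ r ∈ range j, ((l:ℝ) - (r:ℝ)) = (l.descFactorial j : ℝ) := by
  rcases le_or_gt j l with h | h
  · rw [Nat.descFactorial_eq_prod_range, Nat.cast_prod]
    refine Finset.prod_congr rfl fun r hr => ?_
    rw [Nat.cast_sub]
    have := Finset.mem_range.mp hr; omega
  · rw [Nat.descFactorial_eq_zero_iff_lt.mpr h, Nat.cast_zero]
    apply Finset.prod_eq_zero (Finset.mem_range.mpr h)
    simp



private lemma hexp_sum (z : ℝ) : HasSum (fun p : ℕ => z ^ p / (p.factorial : ℝ)) (Real.exp z) := by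
  rw [Real.exp_eq_exp_ℝ]
  exact NormedSpace.expSeries_div_hasSum_exp z

private lemma hasSum_bell (x y t : ℝ) :
    HasSum (fun p : ℕ =>
        (∑' i : ℕ, Real.exp (-x) * (x*y)^i * (i:ℝ)^p / (i.factorial : ℝ)) * t ^ p / (p.factorial : ℝ))
      (Real.exp (x * (y * Real.exp t - 1))) := by
  set f : ℕ × ℕ → ℝ :=
    fun q => (Real.exp (-x) * (x*y)^q.1 * (q.1:ℝ)^q.2 / (q.1.factorial : ℝ)) *
      (t^q.2 / (q.2.factorial : ℝ)) with hf
  have hrow : ∀ i : ℕ, HasSum (fun p => f (i, p))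
      (Real.exp (-x) * (x*y)^i / (i.factorial : ℝ) * Real.exp ((i:ℝ)*t)) := by
    intro i
    have h := (hexp_sum ((i:ℝ)*t)).mul_left (Real.exp (-x) * (x*y)^i / (i.factorial : ℝ))
    refine h.congr_fun fun p => ?_
    simp only [hf, mul_pow]
    ring
  have hcol_sum : HasSum
      (fun i : ℕ => Real.exp (-x) * (x*y)^i / (i.factorial : ℝ) * Real.exp ((i:ℝ)*t))
      (Real.exp (x * (y * Real.exp t - 1))) := by
    have h2 := (hexp_sum (x*y*Real.exp t)).mul_left (Real.exp (-x))
    have h3 : Real.exp (-x) * Real.exp (x*y*Real.exp t) = Real.exp (x*(y*Real.exp t - 1)) := by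
      rw [← Real.exp_add]; ring_nf
    rw [h3] at h2
    refine h2.congr_fun fun i => ?_
    rw [Real.exp_nat_mul, mul_pow]
    ring
  -- absolute summability on ℕ × ℕ
  have habs : Summable (fun q : ℕ×ℕ => |f q|) := by
    rw [summable_prod_of_nonneg (fun q => abs_nonneg _)]
    have harow : ∀ i : ℕ, HasSum (fun p => |f (i, p)|)
        (Real.exp (-x) * |x*y|^i / (i.factorial : ℝ) * Real.exp ((i:ℝ)*|t|)) := by
      intro i
      have h := (hexp_sum ((i:ℝ)*|t|)).mul_left (Real.exp (-x) * |x*y|^i / (i.factorial : ℝ))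
      refine h.congr_fun fun p => ?_
      simp only [hf, mul_pow, abs_mul, abs_div, abs_pow, Nat.abs_cast,
        abs_of_pos (Real.exp_pos (-x))]
      ring
    refine ⟨fun i => (harow i).summable, ?_⟩
    have hS : Summable (fun i : ℕ =>
        Real.exp (-x) * ((|x*y| * Real.exp |t|)^i / (i.factorial : ℝ))) :=
      (Real.summable_pow_div_factorial _).mul_left _
    refine hS.congr fun i => ?_
    rw [(harow i).tsum_eq, Real.exp_nat_mul, mul_pow]
    ring
  have hsf : Summable f := summable_abs_iff.mp habs
  have htot : HasSum f (Real.exp (x * (y * Real.exp t - 1))) := by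
    have h1 := hsf.hasSum
    have h2 := h1.prod_fiberwise hrow
    rwa [h2.unique hcol_sum] at h1
  -- swap and take fibers over p
  have hswap : HasSum (fun q : ℕ×ℕ => f (q.2, q.1)) (Real.exp (x * (y * Real.exp t - 1))) :=
    ((Equiv.prodComm ℕ ℕ).hasSum_iff).mpr htot
  refine hswap.prod_fiberwise fun p => ?_
  have hcol : Summable (fun i : ℕ => Real.exp (-x) * (x*y)^i * (i:ℝ)^p / (i.factorial : ℝ)) :=
    ((summable_main (x*y) p).mul_left (Real.exp (-x))).congr fun i => by ring
  have := hcol.hasSum.mul_right (t^p / (p.factorial : ℝ))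
  rw [← mul_div_assoc] at this
  exact this.congr_fun fun i => rfl

private lemma coeff_unique {ε : ℝ} (hε : 0 < ε) {c d : ℕ → ℝ} {g : ℝ → ℝ}
    (hc : ∀ t : ℝ, |t| < ε → HasSum (fun p : ℕ => c p * t ^ p) (g t))
    (hd : ∀ t : ℝ, |t| < ε → HasSum (fun p : ℕ => d p * t ^ p) (g t)) : c = d := by
  have key : ∀ (e : ℕ → ℝ), (∀ t : ℝ, |t| < ε → HasSum (fun p => e p * t ^ p) (g t)) →
      HasFPowerSeriesAt g (FormalMultilinearSeries.ofScalars ℝ e) 0 := by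
    intro e he
    set r : NNReal := (ε/2).toNNReal with hr
    have hrc : (r : ℝ) = ε/2 := Real.coe_toNNReal _ (by positivity)
    refine ⟨(r : ENNReal), ?_, ?_, ?_⟩
    · apply FormalMultilinearSeries.le_radius_of_summable_norm
      have h2 : |(ε/2 : ℝ)| < ε := by rw [abs_of_pos (by positivity)]; linarith
      refine ((he (ε/2) h2).summable.abs).congr fun p => ?_
      rw [FormalMultilinearSeries.ofScalars_norm, hrc, abs_mul, abs_pow,
        abs_of_pos (by positivity : (0:ℝ) < ε/2), Real.norm_eq_abs]
    · exact ENNReal.coe_pos.mpr (Real.toNNReal_pos.mpr (by positivity))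
    · intro t ht
      rw [mem_emetric_ball_zero_iff] at ht
      have ht' : |t| < ε := by
        have h3 : ‖t‖₊ < r := by exact_mod_cast ht
        have h4 := (NNReal.coe_lt_coe.mpr h3)
        rw [coe_nnnorm, Real.norm_eq_abs, hrc] at h4
        linarith
      simp only [FormalMultilinearSeries.ofScalars_apply_eq, smul_eq_mul, zero_add]
      exact he t ht'
  have := (key c hc).eq_formalMultilinearSeries (key d hd)
  exact FormalMultilinearSeries.ofScalars_series_injective ℝ ℝ this

private lemma bell_identity (S : ℕ → ℕ → ℝ)
    (hS : ∀ m : ℕ, ∀ z : ℝ,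
      z ^ m = ∑ j ∈ Finset.range (m + 1), S m j * ∏ i ∈ Finset.range j, (z - (i : ℝ)))
    (x y : ℝ) (n m : ℕ) (b : ℕ → ℝ)
    (hb : ∀ p, b p = ∑' i : ℕ, Real.exp (-x) * (x*y)^i * (i:ℝ)^p / (i.factorial : ℝ)) :
    b (n + m) =
      ∑ j ∈ Finset.range (m + 1), ∑ k ∈ Finset.range (n + 1),
        S m j * (n.choose k : ℝ) * (j : ℝ) ^ (n - k) * y ^ j * x ^ j * b k := by
  set E := Real.exp (-x) with hE
  have hEpos : 0 < E := Real.exp_pos _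
  set c := x * y with hc
  have hsump : ∀ p : ℕ, Summable (fun i : ℕ => E * c^i * (i:ℝ)^p / (i.factorial : ℝ)) :=
    fun p => ((summable_main c p).mul_left E).congr fun i => by ring
  have hD : ∀ j : ℕ, Summable
      (fun l : ℕ => E * c^l * (l:ℝ)^n * (l.descFactorial j : ℝ) / (l.factorial : ℝ)) := by
    intro j
    rw [← summable_abs_iff]
    refine Summable.of_nonneg_of_le (fun l => abs_nonneg _) (fun l => ?_)
      (((summable_abs_pow c (n+j)).mul_left E))
    have h1 : |E * c^l * (l:ℝ)^n * (l.descFactorial j : ℝ) / (l.factorial : ℝ)|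
        = E * |c|^l * (l:ℝ)^n * (l.descFactorial j : ℝ) / (l.factorial : ℝ) := by
      rw [abs_div, abs_mul, abs_mul, abs_mul, abs_pow, abs_of_pos hEpos, Nat.abs_cast,
        Nat.abs_cast, abs_pow, Nat.abs_cast]
    rw [h1]
    have h2 : ((l.descFactorial j : ℕ) : ℝ) ≤ (l:ℝ)^j := by
      exact_mod_cast Nat.descFactorial_le_pow l j
    calc E * |c|^l * (l:ℝ)^n * (l.descFactorial j : ℝ) / (l.factorial : ℝ)
        ≤ E * |c|^l * (l:ℝ)^n * (l:ℝ)^j / (l.factorial : ℝ) := by gcongr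
      _ = E * (|c|^l * (l:ℝ)^(n+j) / (l.factorial : ℝ)) := by rw [pow_add]; ring
  -- step 1: expand l^m by hS and swap with finite sum
  have step1 : b (n + m) = ∑ j ∈ Finset.range (m+1),
      S m j * ∑' l : ℕ, E * c^l * (l:ℝ)^n * (l.descFactorial j : ℝ) / (l.factorial : ℝ) := by
    rw [hb]
    rw [show (∑' l : ℕ, E * c^l * (l:ℝ)^(n+m) / (l.factorial : ℝ))
        = ∑' l : ℕ, ∑ j ∈ Finset.range (m+1),
            S m j * (E * c^l * (l:ℝ)^n * (l.descFactorial j : ℝ) / (l.factorial : ℝ)) from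
      tsum_congr fun l => by
        rw [pow_add]
        calc E * c^l * ((l:ℝ)^n * (l:ℝ)^m) / (l.factorial : ℝ)
            = (l:ℝ)^m * (E * c^l * (l:ℝ)^n / (l.factorial : ℝ)) := by ring
          _ = (∑ j ∈ Finset.range (m+1), S m j * ∏ r ∈ Finset.range j, ((l:ℝ) - (r:ℝ)))
              * (E * c^l * (l:ℝ)^n / (l.factorial : ℝ)) := by rw [← hS m (l:ℝ)]
          _ = _ := by
              rw [Finset.sum_mul]
              refine Finset.sum_congr rfl fun j _ => ?_
              rw [prod_range_cast]
              ring]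
    rw [Summable.tsum_finsetSum (fun j _ => (hD j).mul_left (S m j))]
    exact Finset.sum_congr rfl fun j _ => tsum_mul_left
  -- step 2: reindex each inner tsum
  have step2 : ∀ j : ℕ,
      (∑' l : ℕ, E * c^l * (l:ℝ)^n * (l.descFactorial j : ℝ) / (l.factorial : ℝ))
      = ∑ k ∈ Finset.range (n+1),
          (n.choose k : ℝ) * (j:ℝ)^(n-k) * c^j * b k := by
    intro j
    have hreindex : (∑' i : ℕ, E * c^(i+j) * ((i+j : ℕ):ℝ)^n *
          ((i+j).descFactorial j : ℝ) / ((i+j).factorial : ℝ))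
        = ∑' l : ℕ, E * c^l * (l:ℝ)^n * (l.descFactorial j : ℝ) / (l.factorial : ℝ) := by
      refine Function.Injective.tsum_eq (g := fun i : ℕ => i + j)
        (f := fun l : ℕ => E * c^l * (l:ℝ)^n * (l.descFactorial j : ℝ) / (l.factorial : ℝ))
        (add_left_injective j) fun l hl => ?_
      by_cases hjl : j ≤ l
      · exact ⟨l - j, show l - j + j = l by omega⟩
      · exfalso
        apply Function.mem_support.mp hl
        rw [Nat.descFactorial_eq_zero_iff_lt.mpr (by omega)]
        simp
    have hterm : ∀ i : ℕ, E * c^(i+j) * ((i+j : ℕ):ℝ)^n *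
          ((i+j).descFactorial j : ℝ) / ((i+j).factorial : ℝ)
        = ∑ k ∈ Finset.range (n+1),
            (n.choose k : ℝ) * (j:ℝ)^(n-k) * c^j * (E * c^i * (i:ℝ)^k / (i.factorial : ℝ)) := by
      intro i
      have hfac : ((i+j).descFactorial j : ℝ) / ((i+j).factorial : ℝ)
          = 1 / (i.factorial : ℝ) := by
        have h5 := Nat.factorial_mul_descFactorial (Nat.le_add_left j i)
        have h6 : i + j - j = i := by omega
        rw [h6] at h5
        have h7 : ((i.factorial : ℕ):ℝ) * ((i+j).descFactorial j : ℝ) = ((i+j).factorial : ℝ) := by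
          exact_mod_cast congrArg (Nat.cast : ℕ → ℝ) h5
        have hfne : ((i+j).factorial : ℝ) ≠ 0 := Nat.cast_ne_zero.mpr (i+j).factorial_ne_zero
        have hine : ((i.factorial : ℕ):ℝ) ≠ 0 := Nat.cast_ne_zero.mpr i.factorial_ne_zero
        field_simp
        linarith [h7]
      have hpow : ((i+j : ℕ):ℝ)^n = ∑ k ∈ Finset.range (n+1),
          (i:ℝ)^k * (j:ℝ)^(n-k) * (n.choose k : ℝ) := by
        push_cast
        exact add_pow (i:ℝ) (j:ℝ) n
      calc E * c^(i+j) * ((i+j : ℕ):ℝ)^n * ((i+j).descFactorial j : ℝ) / ((i+j).factorial : ℝ)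
          = E * c^(i+j) * ((i+j : ℕ):ℝ)^n *
              (((i+j).descFactorial j : ℝ) / ((i+j).factorial : ℝ)) := by ring
        _ = E * c^(i+j) * ((i+j : ℕ):ℝ)^n * (1 / (i.factorial : ℝ)) := by rw [hfac]
        _ = ∑ k ∈ Finset.range (n+1),
              (n.choose k : ℝ) * (j:ℝ)^(n-k) * c^j * (E * c^i * (i:ℝ)^k / (i.factorial : ℝ)) := by
            rw [hpow, Finset.mul_sum, Finset.sum_mul]
            refine Finset.sum_congr rfl fun k _ => ?_
            rw [pow_add c]
            ring
    rw [← hreindex]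
    rw [tsum_congr hterm]
    rw [Summable.tsum_finsetSum (fun k _ => ((hsump k).mul_left ((n.choose k : ℝ) * (j:ℝ)^(n-k) * c^j)))]
    refine Finset.sum_congr rfl fun k _ => ?_
    rw [tsum_mul_left, hb]
  rw [step1]
  refine Finset.sum_congr rfl fun j _ => ?_
  rw [step2 j, Finset.mul_sum]
  refine Finset.sum_congr rfl fun k _ => ?_
  rw [hc, mul_pow]
  ring

/-- Spivey's formula for the classical two-variable Bell polynomials, defined by the EGF
`e^{x(y eᵗ − 1)} = Σ φ_n(x,y) tⁿ/n!`:
`φ_{n+m}(x,y) = Σ_{j=0}^m Σ_{k=0}^n S(m,j) C(n,k) j^{n−k} y^j x^j φ_k(x,y)`, where `S(m,j)`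
are the Stirling numbers of the second kind, characterized by
`z^m = Σ_j S(m,j) z(z-1)⋯(z-j+1)`. -/
theorem two_variable_Bell_spivey_classical
    (S : ℕ → ℕ → ℝ)
    (hS : ∀ m : ℕ, ∀ z : ℝ,
      z ^ m = ∑ j ∈ Finset.range (m + 1), S m j * ∏ i ∈ Finset.range j, (z - (i : ℝ)))
    (φ : ℕ → ℝ → ℝ → ℝ)
    (hφ : ∀ x y : ℝ, ∃ ε > 0, ∀ t : ℝ, |t| < ε →
      HasSum (fun n : ℕ => φ n x y * t ^ n / (n.factorial : ℝ))
        (Real.exp (x * (y * Real.exp t - 1))))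
    (x y : ℝ) (n m : ℕ) :
    φ (n + m) x y =
      ∑ j ∈ Finset.range (m + 1), ∑ k ∈ Finset.range (n + 1),
        S m j * (n.choose k : ℝ) * (j : ℝ) ^ (n - k) * y ^ j * x ^ j * φ k x y := by
  obtain ⟨ε, hε, hsum⟩ := hφ x y
  set b : ℕ → ℝ :=
    fun p => ∑' i : ℕ, Real.exp (-x) * (x*y)^i * (i:ℝ)^p / (i.factorial : ℝ) with hbdef
  have hphi : ∀ k : ℕ, φ k x y = b k := by
    have hcd : (fun p : ℕ => φ p x y / (p.factorial : ℝ))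
        = fun p : ℕ => b p / (p.factorial : ℝ) := by
      refine coeff_unique hε (g := fun t => Real.exp (x * (y * Real.exp t - 1)))
        (fun t ht => ?_) (fun t ht => ?_)
      · exact (hsum t ht).congr_fun fun p => by ring
      · exact (hasSum_bell x y t).congr_fun fun p => by rw [hbdef]; ring
    intro k
    have h1 := congrFun hcd k
    have h2 : ((k.factorial : ℕ):ℝ) ≠ 0 := Nat.cast_ne_zero.mpr k.factorial_ne_zero
    field_simp at h1
    exact h1
  simp only [hphi]
  exact bell_identity S hS x y n m b (fun p => rfl)
end
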